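/- arXiv:2503.10819 — 8 statements merged into one kernel-verified Lean document; each statement's English description precedes it below -/
import Mathlib

section
/- If an LTL specification φ over input signals I and output signals O is realizable by a finite-state transducer with n states (in the full-visibility setting), then φ is (∅, I, ∅, O)-realizable by a transducer-with-guided-environment (TGE) having a single state and environment memory of size n: the one-state TGE always emits the program that simulates the given transducer on the environment's memory. -/
/-- LTL formulas over atomic propositions of type `α`. -/
inductive LTL (α : Type) : Type where
  | tt : LTL α
  | ff : LTL α
  | atom : α → LTL α
  | not : LTL α → LTL α
  | and : LTL α → LTL α → LTL α
  | or : LTL α → LTL α → LTL α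
  | next : LTL α → LTL α
  | untl : LTL α → LTL α → LTL α

namespace LTL

variable {α β : Type}

/-- Satisfaction of an LTL formula at position `j` of an infinite word. -/
def satAt (w : ℕ → Set α) : ℕ → LTL α → Prop
  | _, .tt => True
  | _, .ff => False
  | j, .atom a => a ∈ w j
  | j, .not φ => ¬ satAt w j φ
  | j, .and φ ψ => satAt w j φ ∧ satAt w j ψ
  | j, .or φ ψ => satAt w j φ ∨ satAt w j ψ
  | j, .next φ => satAt w (j+1) φ
  | j, .untl φ ψ => ∃ k, j ≤ k ∧ satAt w k ψ ∧ ∀ l, j ≤ l → l < k → satAt w l φ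

/-- A word satisfies a formula if it satisfies it at position 0. -/
def sat (w : ℕ → Set α) (φ : LTL α) : Prop := satAt w 0 φ

/-- Eventually. -/
def F (φ : LTL α) : LTL α := untl tt φ
/-- Always. -/
def G (φ : LTL α) : LTL α := not (F (not φ))
/-- Boolean equivalence. -/
def iff_ (φ ψ : LTL α) : LTL α := or (and φ ψ) (and (not φ) (not ψ))
/-- `Xpow k φ` is `X^k φ`. -/
def Xpow : ℕ → LTL α → LTL α
  | 0, φ => φ
  | k+1, φ => next (Xpow k φ)
/-- `Fpow k φ` is `F^{k+1} φ`: "`φ` holds in at least `k+1` positions".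
    (`F^1 p = F p`, `F^{j+1} p = F (p ∧ X (F^j p))`.) -/
def Fpow : ℕ → LTL α → LTL α
  | 0, φ => F φ
  | k+1, φ => F (and φ (next (Fpow k φ)))

/-- Relabeling of atoms. -/
def map (f : α → β) : LTL α → LTL β
  | .tt => .tt
  | .ff => .ff
  | .atom a => .atom (f a)
  | .not φ => .not (map f φ)
  | .and φ ψ => .and (map f φ) (map f ψ)
  | .or φ ψ => .or (map f φ) (map f ψ)
  | .next φ => .next (map f φ)
  | .untl φ ψ => .untl (map f φ) (map f ψ)

/-- A formula is temporal-operator free (propositional). -/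
def temporalFree : LTL α → Bool
  | .tt => true
  | .ff => true
  | .atom _ => true
  | .not φ => temporalFree φ
  | .and φ ψ => temporalFree φ && temporalFree ψ
  | .or φ ψ => temporalFree φ && temporalFree ψ
  | .next _ => false
  | .untl _ _ => false

/-- `props ψ`: the maximal propositional subformulas of `ψ`. -/
def props : LTL α → List (LTL α)
  | .tt => [.tt]
  | .ff => [.ff]
  | .atom a => [.atom a]
  | .not φ => if temporalFree (LTL.not φ) then [.not φ] else props φ
  | .and φ ψ => if temporalFree (LTL.and φ ψ) then [.and φ ψ] else props φ ++ props ψ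
  | .or φ ψ => if temporalFree (LTL.or φ ψ) then [.or φ ψ] else props φ ++ props ψ
  | .next φ => props φ
  | .untl φ ψ => props φ ++ props ψ

/-- All atoms of the formula satisfy predicate `p`. -/
def atomsAll (p : α → Bool) : LTL α → Bool
  | .tt => true
  | .ff => true
  | .atom a => p a
  | .not φ => atomsAll p φ
  | .and φ ψ => atomsAll p φ && atomsAll p ψ
  | .or φ ψ => atomsAll p φ && atomsAll p ψ
  | .next φ => atomsAll p φ
  | .untl φ ψ => atomsAll p φ && atomsAll p ψ

/-- Maximal subformulas all of whose atoms satisfy `p` (used for `cl_H`). -/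
def clP (p : α → Bool) : LTL α → List (LTL α)
  | .tt => []
  | .ff => []
  | .atom a => if p a then [.atom a] else []
  | .not φ => if atomsAll p (LTL.not φ) then [.not φ] else clP p φ
  | .and φ ψ => if atomsAll p (LTL.and φ ψ) then [.and φ ψ] else clP p φ ++ clP p ψ
  | .or φ ψ => if atomsAll p (LTL.or φ ψ) then [.or φ ψ] else clP p φ ++ clP p ψ
  | .next φ => clP p φ
  | .untl φ ψ => clP p φ ++ clP p ψ

/-- `clH p φ`: maximal subformulas of formulas in `props φ` all of whose atoms
    satisfy `p` (i.e. are hidden signals). -/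
def clH (p : α → Bool) (φ : LTL α) : List (LTL α) :=
  (props φ).foldr (fun ψ acc => clP p ψ ++ acc) []

/-- Propositional satisfaction of a formula by a single assignment. -/
def propSat (σ : Set α) (φ : LTL α) : Prop := satAt (fun _ => σ) 0 φ

end LTL

/-- A (full-visibility) finite-state transducer with inputs `ι`, outputs `o`
    and states `S`. -/
structure Transducer (ι o S : Type) where
  init : S
  trans : S → Set ι → S
  out : S → Set ι → Set o

namespace Transducer

variable {ι o S : Type}

/-- The run of a transducer on an input word. -/
def run (T : Transducer ι o S) (wI : ℕ → Set ι) : ℕ → S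
  | 0 => T.init
  | j+1 => T.trans (run T wI j) (wI j)

/-- The computation of a transducer on an input word, as a word over `2^{I ∪ O}`. -/
def comp (T : Transducer ι o S) (wI : ℕ → Set ι) (j : ℕ) : Set (ι ⊕ o) :=
  Sum.inl '' wI j ∪ Sum.inr '' T.out (T.run wI j) (wI j)

/-- `(I,O)`-realizability. -/
def Realizes (T : Transducer ι o S) (φ : LTL (ι ⊕ o)) : Prop :=
  ∀ wI, LTL.sat (T.comp wI) φ

end Transducer

/-- A transducer with a guided environment (TGE): visible inputs `ν`, hidden
    inputs `η`, controlled outputs `γc`, guided outputs `γg`, states `S`,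
    environment memory `M`.  Each transition emits an assignment to the
    controlled outputs together with a program `M × 2^H → M × 2^G`. -/
structure TGE (ν η γc γg S M : Type) where
  init : S
  m0 : M
  trans : S → Set ν → S
  out : S → Set ν → Set γc × (M → Set η → M × Set γg)

namespace TGE

variable {ν η γc γg S M : Type}

/-- The run of a TGE depends only on the visible inputs. -/
def run (T : TGE ν η γc γg S M) (wV : ℕ → Set ν) : ℕ → S
  | 0 => T.init
  | j+1 => T.trans (run T wV j) (wV j)

/-- The environment's memory sequence, obtained by iterating the emitted
    programs on the hidden inputs. -/
def mem (T : TGE ν η γc γg S M) (wV : ℕ → Set ν) (wH : ℕ → Set η) : ℕ → M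
  | 0 => T.m0
  | j+1 => ((T.out (T.run wV j) (wV j)).2 (mem T wV wH j) (wH j)).1

/-- The guided output at step `j`. -/
def guided (T : TGE ν η γc γg S M) (wV : ℕ → Set ν) (wH : ℕ → Set η) (j : ℕ) :
    Set γg :=
  ((T.out (T.run wV j) (wV j)).2 (T.mem wV wH j) (wH j)).2

/-- The computation of a TGE, over `2^{(V ∪ H) ∪ (C ∪ G)}`. -/
def comp (T : TGE ν η γc γg S M) (wV : ℕ → Set ν) (wH : ℕ → Set η) (j : ℕ) :
    Set ((ν ⊕ η) ⊕ (γc ⊕ γg)) :=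
  Sum.inl '' (Sum.inl '' wV j ∪ Sum.inr '' wH j) ∪
    Sum.inr '' (Sum.inl '' (T.out (T.run wV j) (wV j)).1 ∪
                 Sum.inr '' T.guided wV wH j)

/-- `(V,H,C,G)`-realizability of an LTL specification. -/
def Realizes (T : TGE ν η γc γg S M) (φ : LTL ((ν ⊕ η) ⊕ (γc ⊕ γg))) : Prop :=
  ∀ wV wH, LTL.sat (T.comp wV wH) φ

/-- `(V,H,C,G)`-realizability of an arbitrary language. -/
def RealizesL (T : TGE ν η γc γg S M)
    (L : Set (ℕ → Set ((ν ⊕ η) ⊕ (γc ⊕ γg)))) : Prop :=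
  ∀ wV wH, T.comp wV wH ∈ L

end TGE

/-!
The environment's memory can hold the transducer's state: if every transition emits the
program `(m, i) ↦ (δ m i, τ m i)`, the memory sequence is exactly the transducer's run on
the hidden inputs, so the computation of the TGE is the transducer's computation with its
letters relabelled. LTL satisfaction is invariant under such a relabelling of atoms.
-/

namespace LTL

variable {α β : Type}

theorem satAt_map_iff (f : α → β) {w : ℕ → Set β} {w' : ℕ → Set α}
    (hw : ∀ j a, f a ∈ w j ↔ a ∈ w' j) (φ : LTL α) (j : ℕ) :
    satAt w j (φ.map f) ↔ satAt w' j φ := by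
  induction φ generalizing j with
  | atom a => exact hw j a
  | tt | ff => rfl
  | not φ ih => simp only [map, satAt, ih]
  | and φ ψ ihφ ihψ | or φ ψ ihφ ihψ => simp only [map, satAt, ihφ, ihψ]
  | next φ ih => simp only [map, satAt, ih]
  | untl φ ψ ihφ ihψ => simp only [map, satAt, ihφ, ihψ]

end LTL

namespace Transducer

variable {ι o S ν γc : Type}

@[simps]
def toTGE (T : Transducer ι o S) : TGE ν ι γc o Unit S where
  init := ()
  m0 := T.init
  trans _ _ := ()
  out _ _ := (∅, fun m i => (T.trans m i, T.out m i))

theorem toTGE_mem (T : Transducer ι o S) (wV : ℕ → Set ν) (wH : ℕ → Set ι) :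
    (T.toTGE : TGE ν ι γc o Unit S).mem wV wH = T.run wH := by
  funext j
  induction j with
  | zero => rfl
  | succ j ih => simp only [TGE.mem, ih, run, toTGE_out]

theorem map_mem_toTGE_comp_iff (T : Transducer ι o S) (wV : ℕ → Set ν) (wH : ℕ → Set ι)
    (j : ℕ) (a : ι ⊕ o) :
    Sum.map Sum.inr Sum.inr a ∈ (T.toTGE : TGE ν ι γc o Unit S).comp wV wH j ↔
      a ∈ T.comp wH j := by
  cases a <;> simp [TGE.comp, TGE.guided, comp, toTGE_mem]

theorem toTGE_realizes_map {φ : LTL (ι ⊕ o)} {T : Transducer ι o S} (h : T.Realizes φ) :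
    (T.toTGE : TGE ν ι γc o Unit S).Realizes (φ.map (Sum.map Sum.inr Sum.inr)) :=
  fun wV wH => (LTL.satAt_map_iff _ (map_mem_toTGE_comp_iff T wV wH) φ 0).2 (h wH)

end Transducer

/-- If `φ` is realizable by a transducer with state space `S`
(`n` states), then `φ` is `(∅, I, ∅, O)`-realizable by the one-state TGE with
environment memory `S` that always emits the program simulating the
transducer on the environment's memory. -/
theorem stmt0 {ι o S : Type} (φ : LTL (ι ⊕ o)) (T : Transducer ι o S)
    (h : T.Realizes φ) :
    (TGE.mk () T.init (fun _ _ => ())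
        (fun _ _ => (∅, fun m i => (T.trans m i, T.out m i))) :
      TGE Empty ι Empty o Unit S).Realizes
      (φ.map (Sum.map Sum.inr Sum.inr)) :=
  Transducer.toTGE_realizes_map h
end

section
/- If an LTL specification φ is (V, H, C, G)-realizable by a TGE with n states and environment memory k, then φ is (I, O)-realizable in the full-visibility setting by an ordinary transducer with n·k states, obtained as the product of the TGE's state space with the environment memory. -/
/-- With the hidden inputs visible, the transducer can run each emitted program itself, on its
own copy of the environment memory. -/
def TGE.toTransducer {ν η γc γg S M : Type} (T : TGE ν η γc γg S M) :
    Transducer (ν ⊕ η) (γc ⊕ γg) (S × M) where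
  init := (T.init, T.m0)
  trans p σ := (T.trans p.1 (Sum.inl ⁻¹' σ),
    ((T.out p.1 (Sum.inl ⁻¹' σ)).2 p.2 (Sum.inr ⁻¹' σ)).1)
  out p σ := Sum.inl '' (T.out p.1 (Sum.inl ⁻¹' σ)).1 ∪
    Sum.inr '' ((T.out p.1 (Sum.inl ⁻¹' σ)).2 p.2 (Sum.inr ⁻¹' σ)).2

namespace TGE

variable {ν η γc γg S M : Type} (T : TGE ν η γc γg S M) (wI : ℕ → Set (ν ⊕ η))

theorem run_toTransducer (j : ℕ) :
    T.toTransducer.run wI j =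
      (T.run (fun i => Sum.inl ⁻¹' wI i) j,
        T.mem (fun i => Sum.inl ⁻¹' wI i) (fun i => Sum.inr ⁻¹' wI i) j) := by
  induction j with
  | zero => rfl
  | succ j ih => simp only [Transducer.run, TGE.run, TGE.mem, ih]; rfl

theorem comp_toTransducer :
    T.toTransducer.comp wI =
      T.comp (fun i => Sum.inl ⁻¹' wI i) (fun i => Sum.inr ⁻¹' wI i) := by
  funext j
  simp only [Transducer.comp, TGE.comp, run_toTransducer, TGE.guided,
    Set.image_preimage_inl_union_image_preimage_inr]
  rfl

theorem Realizes.toTransducer {φ : LTL ((ν ⊕ η) ⊕ (γc ⊕ γg))} (h : T.Realizes φ) :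
    T.toTransducer.Realizes φ := fun wI => by
  rw [comp_toTransducer]
  exact h _ _

end TGE

/-- If `φ` is `(V,H,C,G)`-realizable by a TGE with states `S` and
environment memory `M`, then `φ` is `(I,O)`-realizable (full visibility) by an
ordinary transducer with state space `S × M`. -/
theorem stmt1 {ν η γc γg S M : Type} (φ : LTL ((ν ⊕ η) ⊕ (γc ⊕ γg)))
    (T : TGE ν η γc γg S M) (h : T.Realizes φ) :
    ∃ Tr : Transducer (ν ⊕ η) (γc ⊕ γg) (S × M), Tr.Realizes φ :=
  ⟨T.toTransducer, h.toTransducer⟩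
end

section
/- For every k ≥ 1, the specification φ_k = (F^k i₁ ↔ F o₁) ∧ (F^k i₂ ↔ F o₂) — where F^k p means 'p holds in at least k positions' — is ({i₁},{i₂},{o₁},{o₂})-realizable by a TGE with k states and environment memory k, yet every ordinary transducer that (I,O)-realizes φ_k in the full-visibility setting requires at least k² states. -/
/-- `φ_k = (F^k i₁ ↔ F o₁) ∧ (F^k i₂ ↔ F o₂)`, with
`V = {i₁}`, `H = {i₂}`, `C = {o₁}`, `G = {o₂}` (each a singleton `Unit`). -/
def phi2 (k : ℕ) : LTL ((Unit ⊕ Unit) ⊕ (Unit ⊕ Unit)) :=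
  LTL.and
    (LTL.iff_ (LTL.Fpow (k-1) (.atom (.inl (.inl ()))))
      (LTL.F (.atom (.inr (.inl ())))))
    (LTL.iff_ (LTL.Fpow (k-1) (.atom (.inl (.inr ()))))
      (LTL.F (.atom (.inr (.inr ())))))

namespace Stmt2Aux

open LTL

/- ### Generic LTL lemmas -/

lemma satAt_F {α : Type} (w : ℕ → Set α) (j : ℕ) (φ : LTL α) :
    satAt w j (F φ) ↔ ∃ m, j ≤ m ∧ satAt w m φ := by
  constructor
  · rintro ⟨m, hm, hφ, -⟩; exact ⟨m, hm, hφ⟩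
  · rintro ⟨m, hm, hφ⟩; exact ⟨m, hm, hφ, fun _ _ _ => trivial⟩

lemma satAt_iff_ {α : Type} (w : ℕ → Set α) (j : ℕ) (A B : LTL α) :
    satAt w j (iff_ A B) ↔ (satAt w j A ↔ satAt w j B) := by
  show (satAt w j A ∧ satAt w j B) ∨ (¬ satAt w j A ∧ ¬ satAt w j B) ↔ _
  tauto

lemma satAt_and {α : Type} (w : ℕ → Set α) (j : ℕ) (A B : LTL α) :
    satAt w j (.and A B) ↔ (satAt w j A ∧ satAt w j B) := Iff.rfl

lemma satAt_atom {α : Type} (w : ℕ → Set α) (j : ℕ) (a : α) :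
    satAt w j (.atom a) ↔ a ∈ w j := Iff.rfl

lemma satAt_next {α : Type} (w : ℕ → Set α) (j : ℕ) (A : LTL α) :
    satAt w j (.next A) ↔ satAt w (j + 1) A := Iff.rfl

lemma satAt_Fpow {α : Type} (w : ℕ → Set α) (φ : LTL α) :
    ∀ (n j : ℕ), satAt w j (Fpow n φ) ↔
      ∃ s : Finset ℕ, s.card = n + 1 ∧ ∀ m ∈ s, j ≤ m ∧ satAt w m φ := by
  intro n
  induction n with
  | zero =>
    intro j
    rw [Fpow, satAt_F]
    constructor
    · rintro ⟨m, hm, hφ⟩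
      exact ⟨{m}, by simp, by simpa using ⟨hm, hφ⟩⟩
    · rintro ⟨s, hc, hs⟩
      obtain ⟨m, hm⟩ : s.Nonempty := Finset.card_pos.mp (by omega)
      exact ⟨m, (hs m hm).1, (hs m hm).2⟩
  | succ n ih =>
    intro j
    rw [Fpow, satAt_F]
    constructor
    · rintro ⟨m, hjm, hφ, hnext⟩
      obtain ⟨s, hc, hs⟩ := (ih (m + 1)).mp hnext
      have hms : m ∉ s := fun h => by have := (hs m h).1; omega
      refine ⟨insert m s, ?_, ?_⟩
      · rw [Finset.card_insert_of_notMem hms, hc]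
      · intro x hx
        rcases Finset.mem_insert.mp hx with rfl | hx
        · exact ⟨hjm, hφ⟩
        · exact ⟨by have := (hs x hx).1; omega, (hs x hx).2⟩
    · rintro ⟨s, hc, hs⟩
      have hne : s.Nonempty := Finset.card_pos.mp (by omega)
      set m := s.min' hne with hm
      have hmem : m ∈ s := s.min'_mem hne
      have hcard : (s.erase m).card = n + 1 := by
        rw [Finset.card_erase_of_mem hmem, hc]; omega
      have hrest : ∀ x ∈ s.erase m, m + 1 ≤ x ∧ satAt w x φ := by
        intro x hx
        obtain ⟨hne', hxs⟩ := Finset.mem_erase.mp hx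
        have := s.min'_le x hxs
        exact ⟨by omega, (hs x hxs).2⟩
      have hbig : satAt w m (.and φ (.next (Fpow n φ))) :=
        (satAt_and w m φ _).mpr
          ⟨(hs m hmem).2,
            (satAt_next w m _).mpr ((ih (m + 1)).mpr ⟨s.erase m, hcard, hrest⟩)⟩
      exact ⟨m, (hs m hmem).1, hbig⟩

/- ### Counting occurrences of a predicate -/

open Classical in
noncomputable def cnt (P : ℕ → Prop) : ℕ → ℕ
  | 0 => 0
  | j + 1 => cnt P j + if P j then 1 else 0

open Classical in
lemma cnt_succ (P : ℕ → Prop) (j : ℕ) :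
    cnt P (j + 1) = cnt P j + if P j then 1 else 0 := rfl

lemma cnt_mono (P : ℕ → Prop) : Monotone (cnt P) := by
  apply monotone_nat_of_le_succ
  intro j
  rw [cnt_succ]
  omega

lemma le_cnt_of_card (P : ℕ → Prop) :
    ∀ (j : ℕ) (s : Finset ℕ), (∀ m ∈ s, m < j ∧ P m) → s.card ≤ cnt P j := by
  intro j
  induction j with
  | zero =>
    intro s hs
    have : s = ∅ := Finset.eq_empty_of_forall_notMem
      (fun m hm => absurd (hs m hm).1 (by omega))
    simp [this, cnt]
  | succ j ih =>
    intro s hs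
    by_cases hj : j ∈ s
    · have h1 : (s.erase j).card + 1 = s.card := Finset.card_erase_add_one hj
      have h2 : (s.erase j).card ≤ cnt P j := by
        apply ih
        intro m hm
        obtain ⟨hne, hms⟩ := Finset.mem_erase.mp hm
        exact ⟨by have := (hs m hms).1; omega, (hs m hms).2⟩
      have h3 : P j := (hs j hj).2
      rw [cnt_succ, if_pos h3]
      omega
    · have h2 : s.card ≤ cnt P j := by
        apply ih
        intro m hm
        have := hs m hm
        have : m ≠ j := fun h => hj (h ▸ hm)
        exact ⟨by have := (hs m hm).1; omega, (hs m hm).2⟩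
      rw [cnt_succ]
      omega

lemma exists_card_cnt (P : ℕ → Prop) :
    ∀ j : ℕ, ∃ s : Finset ℕ, s.card = cnt P j ∧ ∀ m ∈ s, m < j ∧ P m := by
  intro j
  induction j with
  | zero => exact ⟨∅, by simp [cnt]⟩
  | succ j ih =>
    obtain ⟨s, hc, hs⟩ := ih
    by_cases hj : P j
    · have hjs : j ∉ s := fun h => by have := (hs j h).1; omega
      refine ⟨insert j s, ?_, ?_⟩
      · rw [Finset.card_insert_of_notMem hjs, hc, cnt_succ, if_pos hj]
      · intro m hm
        rcases Finset.mem_insert.mp hm with rfl | hm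
        · exact ⟨by omega, hj⟩
        · exact ⟨by have := (hs m hm).1; omega, (hs m hm).2⟩
    · refine ⟨s, ?_, ?_⟩
      · rw [hc, cnt_succ, if_neg hj]; omega
      · intro m hm
        exact ⟨by have := (hs m hm).1; omega, (hs m hm).2⟩


lemma cardk_iff_cnt (P : ℕ → Prop) (n : ℕ) :
    (∃ s : Finset ℕ, s.card = n ∧ ∀ m ∈ s, P m) ↔ ∃ j, n ≤ cnt P j := by
  constructor
  · rintro ⟨s, hc, hs⟩
    refine ⟨s.sup id + 1, ?_⟩
    rw [← hc]
    apply le_cnt_of_card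
    intro m hm
    have : m ≤ s.sup id := Finset.le_sup (f := id) hm
    exact ⟨by omega, hs m hm⟩
  · rintro ⟨j, hj⟩
    obtain ⟨s, hc, hs⟩ := exists_card_cnt P j
    obtain ⟨t, hts, htc⟩ := Finset.exists_subset_card_eq (by omega : n ≤ s.card)
    exact ⟨t, htc, fun m hm => (hs m (hts hm)).2⟩

lemma cnt_last (P : ℕ → Prop) (k : ℕ) (hk : 1 ≤ k) :
    (∃ j, k - 1 ≤ cnt P j ∧ P j) ↔ ∃ j, k ≤ cnt P j := by
  constructor
  · rintro ⟨j, hj, hP⟩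
    exact ⟨j + 1, by rw [cnt_succ, if_pos hP]; omega⟩
  · rintro ⟨j, hj⟩
    induction j with
    | zero => simp [cnt] at hj; omega
    | succ j ih =>
      by_cases h : k ≤ cnt P j
      · exact ih h
      · rw [cnt_succ] at hj
        by_cases hP : P j
        · rw [if_pos hP] at hj
          exact ⟨j, by omega, hP⟩
        · rw [if_neg hP] at hj; omega

/- ### The TGE construction -/

open Classical in
noncomputable def inc {k : ℕ} (hk : 1 ≤ k) (s : Fin k) (σ : Set Unit) : Fin k :=
  if () ∈ σ then ⟨min (s.val + 1) (k - 1), by omega⟩ else s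

def outS {k : ℕ} (s : Fin k) (σ : Set Unit) : Set Unit :=
  {_u | s.val = k - 1 ∧ () ∈ σ}

noncomputable def myTGE (k : ℕ) (hk : 1 ≤ k) :
    TGE Unit Unit Unit Unit (Fin k) (Fin k) where
  init := ⟨0, hk⟩
  m0 := ⟨0, hk⟩
  trans s σ := inc hk s σ
  out s σ := (outS s σ, fun m σH => (inc hk m σH, outS m σH))

open Classical in
lemma inc_val {k : ℕ} (hk : 1 ≤ k) (s : Fin k) (σ : Set Unit) :
    (inc hk s σ).val = if () ∈ σ then min (s.val + 1) (k - 1) else s.val := by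
  unfold inc
  split <;> rfl

lemma run_val (k : ℕ) (hk : 1 ≤ k) (wV : ℕ → Set Unit) :
    ∀ j, ((myTGE k hk).run wV j).val = min (cnt (fun m => () ∈ wV m) j) (k - 1) := by
  intro j
  induction j with
  | zero => simp [TGE.run, myTGE, cnt]
  | succ j ih =>
    show (inc hk ((myTGE k hk).run wV j) (wV j)).val = _
    rw [inc_val, cnt_succ]
    by_cases h : () ∈ wV j
    · rw [if_pos h, if_pos h, ih]; omega
    · rw [if_neg h, if_neg h, ih]; omega

lemma mem_val (k : ℕ) (hk : 1 ≤ k) (wV wH : ℕ → Set Unit) :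
    ∀ j, ((myTGE k hk).mem wV wH j).val = min (cnt (fun m => () ∈ wH m) j) (k - 1) := by
  intro j
  induction j with
  | zero => simp [TGE.mem, myTGE, cnt]
  | succ j ih =>
    show (inc hk ((myTGE k hk).mem wV wH j) (wH j)).val = _
    rw [inc_val, cnt_succ]
    by_cases h : () ∈ wH j
    · rw [if_pos h, if_pos h, ih]; omega
    · rw [if_neg h, if_neg h, ih]; omega

/- ### Membership in TGE computations -/

section TGEmem

variable {S M : Type} (T : TGE Unit Unit Unit Unit S M)
  (wV wH : ℕ → Set Unit) (j : ℕ)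

lemma tge_comp_i1 :
    Sum.inl (Sum.inl ()) ∈ T.comp wV wH j ↔ () ∈ wV j := by
  simp [TGE.comp]
  exact ⟨fun ⟨u, h⟩ => by cases u; exact h, fun h => ⟨(), h⟩⟩

lemma tge_comp_i2 :
    Sum.inl (Sum.inr ()) ∈ T.comp wV wH j ↔ () ∈ wH j := by
  simp [TGE.comp]
  exact ⟨fun ⟨u, h⟩ => by cases u; exact h, fun h => ⟨(), h⟩⟩

lemma tge_comp_o1 :
    Sum.inr (Sum.inl ()) ∈ T.comp wV wH j ↔
      () ∈ (T.out (T.run wV j) (wV j)).1 := by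
  simp [TGE.comp]
  exact ⟨fun ⟨u, h⟩ => by cases u; exact h, fun h => ⟨(), h⟩⟩

lemma tge_comp_o2 :
    Sum.inr (Sum.inr ()) ∈ T.comp wV wH j ↔ () ∈ T.guided wV wH j := by
  simp [TGE.comp]
  exact ⟨fun ⟨u, h⟩ => by cases u; exact h, fun h => ⟨(), h⟩⟩

end TGEmem

lemma tge_realizes (k : ℕ) (hk : 1 ≤ k) : (myTGE k hk).Realizes (phi2 k) := by
  intro wV wH
  rw [LTL.sat, phi2, satAt_and, satAt_iff_, satAt_iff_]
  constructor
  · -- visible channel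
    rw [satAt_Fpow, satAt_F]
    have h1 : ∀ m : ℕ, satAt ((myTGE k hk).comp wV wH) m
        (.atom (.inl (.inl ()))) ↔ () ∈ wV m := fun m => tge_comp_i1 _ _ _ _
    have h2 : ∀ m : ℕ, satAt ((myTGE k hk).comp wV wH) m
        (.atom (.inr (.inl ()))) ↔
        (((myTGE k hk).run wV m).val = k - 1 ∧ () ∈ wV m) := by
      intro m
      rw [satAt_atom, tge_comp_o1]
      show () ∈ outS _ _ ↔ _
      simp [outS]
    calc (∃ s : Finset ℕ, s.card = k - 1 + 1 ∧ ∀ m ∈ s, 0 ≤ m ∧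
            satAt ((myTGE k hk).comp wV wH) m (.atom (.inl (.inl ()))))
        ↔ (∃ s : Finset ℕ, s.card = k ∧ ∀ m ∈ s, () ∈ wV m) := by
          constructor
          · rintro ⟨s, hc, hs⟩
            exact ⟨s, by omega, fun m hm => (h1 m).mp (hs m hm).2⟩
          · rintro ⟨s, hc, hs⟩
            exact ⟨s, by omega, fun m hm => ⟨Nat.zero_le _, (h1 m).mpr (hs m hm)⟩⟩
      _ ↔ (∃ j, k ≤ cnt (fun m => () ∈ wV m) j) := cardk_iff_cnt _ _
      _ ↔ (∃ j, k - 1 ≤ cnt (fun m => () ∈ wV m) j ∧ () ∈ wV j) :=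
          (cnt_last _ k hk).symm
      _ ↔ _ := by
          constructor
          · rintro ⟨j, hj, hP⟩
            refine ⟨j, Nat.zero_le _, (h2 j).mpr ⟨?_, hP⟩⟩
            rw [run_val]; omega
          · rintro ⟨j, -, hj⟩
            obtain ⟨hr, hP⟩ := (h2 j).mp hj
            rw [run_val] at hr
            exact ⟨j, by omega, hP⟩
  · -- hidden channel
    rw [satAt_Fpow, satAt_F]
    have h1 : ∀ m : ℕ, satAt ((myTGE k hk).comp wV wH) m
        (.atom (.inl (.inr ()))) ↔ () ∈ wH m := fun m => tge_comp_i2 _ _ _ _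
    have h2 : ∀ m : ℕ, satAt ((myTGE k hk).comp wV wH) m
        (.atom (.inr (.inr ()))) ↔
        (((myTGE k hk).mem wV wH m).val = k - 1 ∧ () ∈ wH m) := by
      intro m
      rw [satAt_atom, tge_comp_o2]
      show () ∈ outS _ _ ↔ _
      simp [outS, TGE.guided]
    calc (∃ s : Finset ℕ, s.card = k - 1 + 1 ∧ ∀ m ∈ s, 0 ≤ m ∧
            satAt ((myTGE k hk).comp wV wH) m (.atom (.inl (.inr ()))))
        ↔ (∃ s : Finset ℕ, s.card = k ∧ ∀ m ∈ s, () ∈ wH m) := by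
          constructor
          · rintro ⟨s, hc, hs⟩
            exact ⟨s, by omega, fun m hm => (h1 m).mp (hs m hm).2⟩
          · rintro ⟨s, hc, hs⟩
            exact ⟨s, by omega, fun m hm => ⟨Nat.zero_le _, (h1 m).mpr (hs m hm)⟩⟩
      _ ↔ (∃ j, k ≤ cnt (fun m => () ∈ wH m) j) := cardk_iff_cnt _ _
      _ ↔ (∃ j, k - 1 ≤ cnt (fun m => () ∈ wH m) j ∧ () ∈ wH j) :=
          (cnt_last _ k hk).symm
      _ ↔ _ := by
          constructor
          · rintro ⟨j, hj, hP⟩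
            refine ⟨j, Nat.zero_le _, (h2 j).mpr ⟨?_, hP⟩⟩
            rw [mem_val]; omega
          · rintro ⟨j, -, hj⟩
            obtain ⟨hr, hP⟩ := (h2 j).mp hj
            rw [mem_val] at hr
            exact ⟨j, by omega, hP⟩

/- ### Lower bound for transducers -/

/-- The input word with `x` occurrences of `i₁` and `y` of `i₂` in the prefix,
and `c` extra occurrences of one channel (chosen by `ch`) starting at `k-1`. -/
def W2 (k x y c : ℕ) (ch : Bool) : ℕ → Set (Unit ⊕ Unit) :=
  fun m => {s | match s with
    | Sum.inl _ => m < x ∨ (ch = true ∧ k - 1 ≤ m ∧ m < k - 1 + c)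
    | Sum.inr _ => m < y ∨ (ch = false ∧ k - 1 ≤ m ∧ m < k - 1 + c)}

lemma W2_mem_i1 (k x y c : ℕ) (ch : Bool) (m : ℕ) :
    Sum.inl () ∈ W2 k x y c ch m ↔
      (m < x ∨ (ch = true ∧ k - 1 ≤ m ∧ m < k - 1 + c)) := Iff.rfl

lemma W2_mem_i2 (k x y c : ℕ) (ch : Bool) (m : ℕ) :
    Sum.inr () ∈ W2 k x y c ch m ↔
      (m < y ∨ (ch = false ∧ k - 1 ≤ m ∧ m < k - 1 + c)) := Iff.rfl

section Trans

variable {ι o S : Type} (T : Transducer ι o S)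

lemma tcomp_inl (wI : ℕ → Set ι) (j : ℕ) (x : ι) :
    Sum.inl x ∈ T.comp wI j ↔ x ∈ wI j := by
  simp [Transducer.comp]

lemma tcomp_inr (wI : ℕ → Set ι) (j : ℕ) (y : o) :
    Sum.inr y ∈ T.comp wI j ↔ y ∈ T.out (T.run wI j) (wI j) := by
  simp [Transducer.comp]

lemma run_congr (w w' : ℕ → Set ι) :
    ∀ j, (∀ m, m < j → w m = w' m) → T.run w j = T.run w' j := by
  intro j
  induction j with
  | zero => intro _; rfl
  | succ j ih =>
    intro h
    show T.trans (T.run w j) (w j) = T.trans (T.run w' j) (w' j)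
    rw [ih (fun m hm => h m (by omega)), h j (by omega)]

lemma run_congr_from (w w' : ℕ → Set ι) (L : ℕ)
    (h0 : T.run w L = T.run w' L) (hsuf : ∀ m, L ≤ m → w m = w' m) :
    ∀ j, L ≤ j → T.run w j = T.run w' j := by
  have key : ∀ t, T.run w (L + t) = T.run w' (L + t) := by
    intro t
    induction t with
    | zero => simpa using h0
    | succ t ih =>
      show T.run w (L + t + 1) = T.run w' (L + t + 1)
      show T.trans (T.run w (L + t)) (w (L + t)) =
        T.trans (T.run w' (L + t)) (w' (L + t))
      rw [ih, hsuf (L + t) (by omega)]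
  intro j hj
  have : j = L + (j - L) := by omega
  rw [this]; exact key _

end Trans

section LowerBound

variable {S : Type} (k : ℕ)

/-- Base word: `x` occurrences of `i₁`, `y` of `i₂`, nothing else. -/
def BW (k x y : ℕ) : ℕ → Set (Unit ⊕ Unit) := W2 k x y 0 true

lemma BW_mem_i1 (x y m : ℕ) : Sum.inl () ∈ BW k x y m ↔ m < x := by
  rw [BW, W2_mem_i1]; omega

lemma BW_mem_i2 (x y m : ℕ) : Sum.inr () ∈ BW k x y m ↔ m < y := by
  rw [BW, W2_mem_i2]
  constructor
  · rintro (h | ⟨h, -⟩); exact h; cases h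
  · exact Or.inl

variable (T : Transducer (Unit ⊕ Unit) (Unit ⊕ Unit) S)

/-- Specification in terms of counting, channel 1. -/
lemma spec1 (hk : 1 ≤ k) (hT : T.Realizes (phi2 k)) (wI : ℕ → Set (Unit ⊕ Unit)) :
    (∃ s : Finset ℕ, s.card = k ∧ ∀ m ∈ s, Sum.inl () ∈ wI m) ↔
      (∃ j, Sum.inl () ∈ T.out (T.run wI j) (wI j)) := by
  have h := hT wI
  rw [LTL.sat, phi2, satAt_and, satAt_iff_, satAt_iff_] at h
  have h1 := h.1
  rw [satAt_Fpow, satAt_F] at h1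
  calc (∃ s : Finset ℕ, s.card = k ∧ ∀ m ∈ s, Sum.inl () ∈ wI m)
      ↔ (∃ s : Finset ℕ, s.card = k - 1 + 1 ∧ ∀ m ∈ s, 0 ≤ m ∧
          satAt (T.comp wI) m (.atom (.inl (.inl ())))) := by
        constructor
        · rintro ⟨s, hc, hs⟩
          exact ⟨s, by omega, fun m hm =>
            ⟨Nat.zero_le _, (tcomp_inl T wI m _).mpr (hs m hm)⟩⟩
        · rintro ⟨s, hc, hs⟩
          exact ⟨s, by omega, fun m hm => (tcomp_inl T wI m _).mp (hs m hm).2⟩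
    _ ↔ (∃ m, 0 ≤ m ∧ satAt (T.comp wI) m (.atom (.inr (.inl ())))) := h1
    _ ↔ _ := by
        constructor
        · rintro ⟨j, -, hj⟩
          exact ⟨j, (tcomp_inr T wI j _).mp hj⟩
        · rintro ⟨j, hj⟩
          exact ⟨j, Nat.zero_le _, (tcomp_inr T wI j _).mpr hj⟩

/-- Specification in terms of counting, channel 2. -/
lemma spec2 (hk : 1 ≤ k) (hT : T.Realizes (phi2 k)) (wI : ℕ → Set (Unit ⊕ Unit)) :
    (∃ s : Finset ℕ, s.card = k ∧ ∀ m ∈ s, Sum.inr () ∈ wI m) ↔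
      (∃ j, Sum.inr () ∈ T.out (T.run wI j) (wI j)) := by
  have h := hT wI
  rw [LTL.sat, phi2, satAt_and, satAt_iff_, satAt_iff_] at h
  have h2 := h.2
  rw [satAt_Fpow, satAt_F] at h2
  calc (∃ s : Finset ℕ, s.card = k ∧ ∀ m ∈ s, Sum.inr () ∈ wI m)
      ↔ (∃ s : Finset ℕ, s.card = k - 1 + 1 ∧ ∀ m ∈ s, 0 ≤ m ∧
          satAt (T.comp wI) m (.atom (.inl (.inr ())))) := by
        constructor
        · rintro ⟨s, hc, hs⟩
          exact ⟨s, by omega, fun m hm =>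
            ⟨Nat.zero_le _, (tcomp_inl T wI m _).mpr (hs m hm)⟩⟩
        · rintro ⟨s, hc, hs⟩
          exact ⟨s, by omega, fun m hm => (tcomp_inl T wI m _).mp (hs m hm).2⟩
    _ ↔ (∃ m, 0 ≤ m ∧ satAt (T.comp wI) m (.atom (.inr (.inr ())))) := h2
    _ ↔ _ := by
        constructor
        · rintro ⟨j, -, hj⟩
          exact ⟨j, (tcomp_inr T wI j _).mp hj⟩
        · rintro ⟨j, hj⟩
          exact ⟨j, Nat.zero_le _, (tcomp_inr T wI j _).mpr hj⟩

/-- The set of `i₁`-positions of `W2 k x y c ch` is contained in a finite set of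
size `x + (if ch then c else 0)`. -/
lemma card_le_of_W2_i1 (x y c : ℕ) (ch : Bool) (hx : x ≤ k - 1)
    (s : Finset ℕ) (hs : ∀ m ∈ s, Sum.inl () ∈ W2 k x y c ch m) :
    s.card ≤ x + (if ch then c else 0) := by
  have hsub : s ⊆ Finset.range x ∪ Finset.Ico (k - 1) (k - 1 + (if ch then c else 0)) := by
    intro m hm
    have := (W2_mem_i1 k x y c ch m).mp (hs m hm)
    rcases this with h | ⟨hch, h1, h2⟩
    · exact Finset.mem_union_left _ (Finset.mem_range.mpr h)
    · rw [hch]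
      exact Finset.mem_union_right _ (Finset.mem_Ico.mpr ⟨h1, by simpa [hch] using h2⟩)
  calc s.card ≤ _ := Finset.card_le_card hsub
    _ ≤ (Finset.range x).card + (Finset.Ico (k - 1) (k - 1 + (if ch then c else 0))).card :=
        Finset.card_union_le _ _
    _ ≤ x + (if ch then c else 0) := by
        rw [Finset.card_range, Nat.card_Ico]
        omega

lemma card_le_of_W2_i2 (x y c : ℕ) (ch : Bool) (hy : y ≤ k - 1)
    (s : Finset ℕ) (hs : ∀ m ∈ s, Sum.inr () ∈ W2 k x y c ch m) :
    s.card ≤ y + (if ch then 0 else c) := by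
  have hsub : s ⊆ Finset.range y ∪ Finset.Ico (k - 1) (k - 1 + (if ch then 0 else c)) := by
    intro m hm
    have := (W2_mem_i2 k x y c ch m).mp (hs m hm)
    rcases this with h | ⟨hch, h1, h2⟩
    · exact Finset.mem_union_left _ (Finset.mem_range.mpr h)
    · rw [hch]
      exact Finset.mem_union_right _ (Finset.mem_Ico.mpr ⟨h1, by simpa [hch] using h2⟩)
  calc s.card ≤ _ := Finset.card_le_card hsub
    _ ≤ (Finset.range y).card + (Finset.Ico (k - 1) (k - 1 + (if ch then 0 else c))).card :=
        Finset.card_union_le _ _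
    _ ≤ y + (if ch then 0 else c) := by
        rw [Finset.card_range, Nat.card_Ico]
        omega

/-- Exhibit `x + c` many `i₁`-positions in `W2 k x y c true`, when `x ≤ k-1`. -/
lemma exists_card_W2_i1 (x y c : ℕ) (hx : x ≤ k - 1) :
    ∃ s : Finset ℕ, s.card = x + c ∧ ∀ m ∈ s, Sum.inl () ∈ W2 k x y c true m := by
  refine ⟨Finset.range x ∪ Finset.Ico (k - 1) (k - 1 + c), ?_, ?_⟩
  · rw [Finset.card_union_of_disjoint, Finset.card_range, Nat.card_Ico]
    · omega
    · rw [Finset.disjoint_left]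
      intro m hm hm'
      rw [Finset.mem_range] at hm
      rw [Finset.mem_Ico] at hm'
      omega
  · intro m hm
    rw [W2_mem_i1]
    rcases Finset.mem_union.mp hm with h | h
    · exact Or.inl (Finset.mem_range.mp h)
    · exact Or.inr ⟨rfl, (Finset.mem_Ico.mp h).1, (Finset.mem_Ico.mp h).2⟩

lemma exists_card_W2_i2 (x y c : ℕ) (hy : y ≤ k - 1) :
    ∃ s : Finset ℕ, s.card = y + c ∧ ∀ m ∈ s, Sum.inr () ∈ W2 k x y c false m := by
  refine ⟨Finset.range y ∪ Finset.Ico (k - 1) (k - 1 + c), ?_, ?_⟩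
  · rw [Finset.card_union_of_disjoint, Finset.card_range, Nat.card_Ico]
    · omega
    · rw [Finset.disjoint_left]
      intro m hm hm'
      rw [Finset.mem_range] at hm
      rw [Finset.mem_Ico] at hm'
      omega
  · intro m hm
    rw [W2_mem_i2]
    rcases Finset.mem_union.mp hm with h | h
    · exact Or.inl (Finset.mem_range.mp h)
    · exact Or.inr ⟨rfl, (Finset.mem_Ico.mp h).1, (Finset.mem_Ico.mp h).2⟩

/-- `W2` agrees with the base word below `k - 1`. -/
lemma W2_eq_BW_below (x y c : ℕ) (ch : Bool) (m : ℕ) (hm : m < k - 1) :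
    W2 k x y c ch m = BW k x y m := by
  ext s
  cases s with
  | inl u => cases u; rw [W2_mem_i1, BW_mem_i1]; omega
  | inr u => cases u; rw [W2_mem_i2, BW_mem_i2]; constructor
             · rintro (h | ⟨-, h, -⟩); exact h; omega
             · exact Or.inl

/-- Two `W2` words with the same suffix parameters agree above `k - 1`. -/
lemma W2_eq_above (x y x' y' c : ℕ) (ch : Bool)
    (hx : x ≤ k - 1) (hy : y ≤ k - 1) (hx' : x' ≤ k - 1) (hy' : y' ≤ k - 1)
    (m : ℕ) (hm : k - 1 ≤ m) :
    W2 k x y c ch m = W2 k x' y' c ch m := by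
  ext s
  cases s with
  | inl u =>
    cases u; rw [W2_mem_i1, W2_mem_i1]
    have h1 : ¬ m < x := by omega
    have h2 : ¬ m < x' := by omega
    simp [h1, h2]
  | inr u =>
    cases u; rw [W2_mem_i2, W2_mem_i2]
    have h1 : ¬ m < y := by omega
    have h2 : ¬ m < y' := by omega
    simp [h1, h2]

variable [Fintype S]

/-- Key lemma for channel 1: equal states after the prefixes forces equal
`i₁`-counts. -/
lemma key1 (hk : 1 ≤ k) (hT : T.Realizes (phi2 k))
    (x y x' y' : ℕ) (hx : x < k) (hy : y < k) (hx' : x' < k) (hy' : y' < k)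
    (hr : T.run (BW k x y) (k - 1) = T.run (BW k x' y') (k - 1))
    (hlt : x < x') : False := by
  set L := k - 1 with hL
  set c := k - x' with hc
  set U := W2 k x' y' c true with hU
  set U' := W2 k x y c true with hU'
  -- U agrees with BW x' y' below L, U' with BW x y below L
  have hUlow : ∀ m, m < L → U m = BW k x' y' m :=
    fun m hm => W2_eq_BW_below k x' y' c true m hm
  have hU'low : ∀ m, m < L → U' m = BW k x y m :=
    fun m hm => W2_eq_BW_below k x y c true m hm
  -- F o₁ holds on U
  have hFU : ∃ j, Sum.inl () ∈ T.out (T.run U j) (U j) := by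
    rw [← spec1 k T hk hT U]
    obtain ⟨s, hcard, hs⟩ := exists_card_W2_i1 k x' y' c (by omega)
    exact ⟨s, by omega, hs⟩
  obtain ⟨j, hj⟩ := hFU
  -- no o₁ output on base words (fewer than k occurrences)
  have hnoB : ∀ (a b : ℕ), a < k → ∀ m, Sum.inl () ∉ T.out (T.run (BW k a b) m) (BW k a b m) := by
    intro a b ha m hm
    have : ∃ j, Sum.inl () ∈ T.out (T.run (BW k a b) j) (BW k a b j) := ⟨m, hm⟩
    rw [← spec1 k T hk hT] at this
    obtain ⟨s, hcard, hs⟩ := this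
    have : s.card ≤ a + (if true then 0 else 0) := by
      have := card_le_of_W2_i1 k a b 0 true (by omega) s hs
      simpa using this
    simp at this
    omega
  -- hence j ≥ L
  have hjL : L ≤ j := by
    by_contra hjL
    push_neg at hjL
    have hrun : T.run U j = T.run (BW k x' y') j :=
      run_congr T _ _ j (fun m hm => hUlow m (by omega))
    rw [hrun, hUlow j hjL] at hj
    exact hnoB x' y' hx' j hj
  -- runs of U and U' agree from L on
  have hrL : T.run U' L = T.run U L := by
    have e1 : T.run U' L = T.run (BW k x y) L := run_congr T _ _ L hU'low
    have e2 : T.run U L = T.run (BW k x' y') L := run_congr T _ _ L hUlow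
    rw [e1, e2, hr]
  have hsuf : ∀ m, L ≤ m → U' m = U m :=
    fun m hm => W2_eq_above k x y x' y' c true (by omega) (by omega) (by omega) (by omega) m hm
  have hrunj : T.run U' j = T.run U j := run_congr_from T _ _ L hrL hsuf j hjL
  -- so o₁ is output on U' as well
  have hFU' : ∃ j, Sum.inl () ∈ T.out (T.run U' j) (U' j) := by
    refine ⟨j, ?_⟩
    rw [hrunj, hsuf j hjL]
    exact hj
  rw [← spec1 k T hk hT U'] at hFU'
  obtain ⟨s, hcard, hs⟩ := hFU'
  have := card_le_of_W2_i1 k x y c true (by omega) s hs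
  simp at this
  omega

/-- Key lemma for channel 2. -/
lemma key2 (hk : 1 ≤ k) (hT : T.Realizes (phi2 k))
    (x y x' y' : ℕ) (hx : x < k) (hy : y < k) (hx' : x' < k) (hy' : y' < k)
    (hr : T.run (BW k x y) (k - 1) = T.run (BW k x' y') (k - 1))
    (hlt : y < y') : False := by
  set L := k - 1 with hL
  set c := k - y' with hc
  set U := W2 k x' y' c false with hU
  set U' := W2 k x y c false with hU'
  have hUlow : ∀ m, m < L → U m = BW k x' y' m :=
    fun m hm => W2_eq_BW_below k x' y' c false m hm
  have hU'low : ∀ m, m < L → U' m = BW k x y m :=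
    fun m hm => W2_eq_BW_below k x y c false m hm
  have hFU : ∃ j, Sum.inr () ∈ T.out (T.run U j) (U j) := by
    rw [← spec2 k T hk hT U]
    obtain ⟨s, hcard, hs⟩ := exists_card_W2_i2 k x' y' c (by omega)
    exact ⟨s, by omega, hs⟩
  obtain ⟨j, hj⟩ := hFU
  have hnoB : ∀ (a b : ℕ), b < k → ∀ m, Sum.inr () ∉ T.out (T.run (BW k a b) m) (BW k a b m) := by
    intro a b hb m hm
    have : ∃ j, Sum.inr () ∈ T.out (T.run (BW k a b) j) (BW k a b j) := ⟨m, hm⟩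
    rw [← spec2 k T hk hT] at this
    obtain ⟨s, hcard, hs⟩ := this
    have : s.card ≤ b + (if true then 0 else 0) := by
      have := card_le_of_W2_i2 k a b 0 true (by omega) s hs
      simpa using this
    simp at this
    omega
  have hjL : L ≤ j := by
    by_contra hjL
    push_neg at hjL
    have hrun : T.run U j = T.run (BW k x' y') j :=
      run_congr T _ _ j (fun m hm => hUlow m (by omega))
    rw [hrun, hUlow j hjL] at hj
    exact hnoB x' y' hy' j hj
  have hrL : T.run U' L = T.run U L := by
    have e1 : T.run U' L = T.run (BW k x y) L := run_congr T _ _ L hU'low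
    have e2 : T.run U L = T.run (BW k x' y') L := run_congr T _ _ L hUlow
    rw [e1, e2, hr]
  have hsuf : ∀ m, L ≤ m → U' m = U m :=
    fun m hm => W2_eq_above k x y x' y' c false (by omega) (by omega) (by omega) (by omega) m hm
  have hrunj : T.run U' j = T.run U j := run_congr_from T _ _ L hrL hsuf j hjL
  have hFU' : ∃ j, Sum.inr () ∈ T.out (T.run U' j) (U' j) := by
    refine ⟨j, ?_⟩
    rw [hrunj, hsuf j hjL]
    exact hj
  rw [← spec2 k T hk hT U'] at hFU'
  obtain ⟨s, hcard, hs⟩ := hFU'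
  have := card_le_of_W2_i2 k x y c false (by omega) s hs
  simp at this
  omega

lemma lower_bound (hk : 1 ≤ k) (hT : T.Realizes (phi2 k)) :
    k ^ 2 ≤ Fintype.card S := by
  have hinj : Function.Injective
      (fun p : Fin k × Fin k => T.run (BW k p.1.val p.2.val) (k - 1)) := by
    rintro ⟨a, b⟩ ⟨a', b'⟩ h
    simp only at h
    have ha : a.val = a'.val := by
      rcases lt_trichotomy a.val a'.val with hlt | heq | hgt
      · exact absurd (key1 k T hk hT a.val b.val a'.val b'.val
          a.isLt b.isLt a'.isLt b'.isLt h hlt) (by simp)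
      · exact heq
      · exact absurd (key1 k T hk hT a'.val b'.val a.val b.val
          a'.isLt b'.isLt a.isLt b.isLt h.symm hgt) (by simp)
    have hb : b.val = b'.val := by
      rcases lt_trichotomy b.val b'.val with hlt | heq | hgt
      · exact absurd (key2 k T hk hT a.val b.val a'.val b'.val
          a.isLt b.isLt a'.isLt b'.isLt h hlt) (by simp)
      · exact heq
      · exact absurd (key2 k T hk hT a'.val b'.val a.val b.val
          a'.isLt b'.isLt a.isLt b.isLt h.symm hgt) (by simp)
    exact Prod.ext (Fin.ext ha) (Fin.ext hb)
  have := Fintype.card_le_of_injective _ hinj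
  simpa [Fintype.card_prod, Fintype.card_fin, pow_two] using this

end LowerBound

end Stmt2Aux

/-- `φ_k` is `({i₁},{i₂},{o₁},{o₂})`-realizable by a TGE with `k`
states and environment memory `k`, yet every full-visibility transducer
realizing `φ_k` needs at least `k²` states. -/
theorem stmt2 (k : ℕ) (hk : 1 ≤ k) :
    (∃ T : TGE Unit Unit Unit Unit (Fin k) (Fin k), T.Realizes (phi2 k)) ∧
    (∀ (S : Type) [Fintype S] (T : Transducer (Unit ⊕ Unit) (Unit ⊕ Unit) S),
        T.Realizes (phi2 k) → k ^ 2 ≤ Fintype.card S) := by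
  constructor
  · exact ⟨Stmt2Aux.myTGE k hk, Stmt2Aux.tge_realizes k hk⟩
  · intro S _ T hT
    exact Stmt2Aux.lower_bound k T hk hT
end

section
/- For every k ≥ 1, the specification φ_k = G(i ↔ X^k o) is (∅,{i},∅,{o})-realizable by a TGE with environment memory 2^k (using k registers storing the last k values of i), and is not (∅,{i},∅,{o})-realizable by any TGE with environment memory strictly less than 2^k; more precisely, any TGE realizing φ_k must use a memory set M with |M| ≥ 2^k, since the memory-reachability function must be injective on input histories of length k. -/
/-- `φ_k = G(i ↔ X^k o)` with `V = ∅`, `H = {i}`, `C = ∅`, `G = {o}`. -/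
def phi3 (k : ℕ) : LTL ((Empty ⊕ Unit) ⊕ (Empty ⊕ Unit)) :=
  LTL.G (LTL.iff_ (.atom (.inl (.inr ()))) (LTL.Xpow k (.atom (.inr (.inr ())))))

section Aux

open Classical in
/-- classical Bool of membership of `()` in a `Set Unit`. -/
noncomputable def sb (s : Set Unit) : Bool := decide (() ∈ s)

lemma sb_iff (s : Set Unit) : sb s = true ↔ () ∈ s := by
  simp [sb]

lemma exists_unit_mem (s : Set Unit) : (∃ x, x ∈ s) ↔ () ∈ s :=
  ⟨fun ⟨⟨⟩, hx⟩ => hx, fun h => ⟨(), h⟩⟩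

lemma satAt_Xpow_atom {α : Type} (w : ℕ → Set α) (j n : ℕ) (a : α) :
    LTL.satAt w j (LTL.Xpow n (.atom a)) ↔ a ∈ w (j + n) := by
  induction n generalizing j with
  | zero => simp [LTL.Xpow, LTL.satAt]
  | succ n ih =>
      simp only [LTL.Xpow, LTL.satAt, ih]
      rw [show j + 1 + n = j + (n + 1) by omega]

lemma sat_phi3_iff (k : ℕ) (w : ℕ → Set ((Empty ⊕ Unit) ⊕ (Empty ⊕ Unit))) :
    LTL.sat w (phi3 k) ↔
      ∀ j, (Sum.inl (Sum.inr ()) ∈ w j ↔ Sum.inr (Sum.inr ()) ∈ w (j + k)) := by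
  unfold phi3 LTL.G LTL.F LTL.iff_ LTL.sat
  simp only [LTL.satAt, satAt_Xpow_atom]
  constructor
  · intro h j
    by_contra hc
    exact h ⟨j, Nat.zero_le _, by tauto, fun _ _ _ => trivial⟩
  · rintro h ⟨j, -, hj, -⟩
    have := h j
    tauto

/-- The register equivalence. -/
noncomputable def regEquiv (k : ℕ) : (Fin k → Bool) ≃ Fin (2 ^ k) :=
  Fintype.equivFinOfCardEq (by simp)

/-- The shift-register TGE realizing `phi3 k`. -/
noncomputable def shiftT (k : ℕ) (hk : 1 ≤ k) :
    TGE Empty Unit Empty Unit Unit (Fin (2 ^ k)) where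
  init := ()
  m0 := regEquiv k (fun _ => false)
  trans := fun _ _ => ()
  out := fun _ _ => (∅, fun m i =>
    let f := (regEquiv k).symm m
    (regEquiv k (fun t => if (t : ℕ) = 0 then sb i else f ⟨t - 1, by omega⟩),
     if f ⟨k - 1, by omega⟩ = true then Set.univ else ∅))

lemma shiftT_mem (k : ℕ) (hk : 1 ≤ k) (wV : ℕ → Set Empty) (wH : ℕ → Set Unit)
    (j : ℕ) :
    (regEquiv k).symm ((shiftT k hk).mem wV wH j) =
      fun t : Fin k => decide ((t : ℕ) < j) && sb (wH (j - 1 - (t : ℕ))) := by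
  induction j with
  | zero =>
      funext t
      simp [TGE.mem, shiftT]
  | succ j ih =>
      funext t
      have step : (shiftT k hk).mem wV wH (j + 1) =
          regEquiv k (fun t : Fin k => if (t : ℕ) = 0 then sb (wH j)
            else ((regEquiv k).symm ((shiftT k hk).mem wV wH j))
              ⟨(t : ℕ) - 1, by omega⟩) := rfl
      rw [step, Equiv.symm_apply_apply]
      simp only [ih]
      by_cases h0 : (t : ℕ) = 0
      · simp [h0]
      · have h1 : 1 ≤ (t : ℕ) := by omega
        simp only [h0, if_false]
        by_cases hlt : (t : ℕ) < j + 1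
        · have : ((t : ℕ) - 1) < j := by omega
          have he : j - 1 - ((t : ℕ) - 1) = j + 1 - 1 - (t : ℕ) := by omega
          simp [this, hlt, he]
        · have : ¬ ((t : ℕ) - 1) < j := by omega
          simp [this, hlt]

lemma shiftT_guided (k : ℕ) (hk : 1 ≤ k) (wV : ℕ → Set Empty)
    (wH : ℕ → Set Unit) (j : ℕ) :
    (() ∈ (shiftT k hk).guided wV wH j) ↔
      (decide ((k - 1 : ℕ) < j) && sb (wH (j - 1 - (k - 1)))) = true := by
  have h := shiftT_mem k hk wV wH j
  simp only [TGE.guided]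
  show (() ∈ (if ((regEquiv k).symm ((shiftT k hk).mem wV wH j))
      ⟨k - 1, by omega⟩ = true then (Set.univ : Set Unit) else ∅)) ↔ _
  rw [h]
  by_cases hb : (decide ((k - 1 : ℕ) < j) && sb (wH (j - 1 - (k - 1)))) = true
  · simp [hb]
  · simp [hb]

end Aux

/-- `G(i ↔ X^k o)` is `(∅,{i},∅,{o})`-realizable by a TGE with
environment memory `2^k`, and every TGE realizing it needs memory `≥ 2^k`. -/
theorem stmt3 (k : ℕ) (hk : 1 ≤ k) :
    (∃ T : TGE Empty Unit Empty Unit Unit (Fin (2 ^ k)), T.Realizes (phi3 k)) ∧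
    (∀ (S M : Type) [Fintype M] (T : TGE Empty Unit Empty Unit S M),
        T.Realizes (phi3 k) → 2 ^ k ≤ Fintype.card M) := by
  constructor
  · refine ⟨shiftT k hk, ?_⟩
    intro wV wH
    rw [sat_phi3_iff]
    intro j
    have hcl : Sum.inl (Sum.inr ()) ∈ (shiftT k hk).comp wV wH j ↔ () ∈ wH j := by
      simp [TGE.comp, exists_unit_mem]
    have hcr : Sum.inr (Sum.inr ()) ∈ (shiftT k hk).comp wV wH (j + k) ↔
        () ∈ (shiftT k hk).guided wV wH (j + k) := by
      simp [TGE.comp, exists_unit_mem]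
    rw [hcl, hcr, shiftT_guided k hk]
    have h1 : (k - 1 : ℕ) < j + k := by omega
    have h2 : j + k - 1 - (k - 1) = j := by omega
    simp [h1, h2, sb_iff]
  · intro S M _ T hT
    set wV : ℕ → Set Empty := fun _ => ∅ with hwV
    set wrd : (Fin k → Bool) → ℕ → Set Unit := fun h j =>
      if hj : j < k then (if h ⟨j, hj⟩ = true then Set.univ else ∅) else ∅ with hwrd
    have hmemw : ∀ h t, () ∈ wrd h t ↔ ∃ ht : t < k, h ⟨t, ht⟩ = true := by
      intro h t
      by_cases ht : t < k
      · by_cases hb : h ⟨t, ht⟩ = true <;> simp [hwrd, ht, hb]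
      · simp [hwrd, ht]
    have key : Function.Injective (fun h : Fin k → Bool => T.mem wV (wrd h) k) := by
      intro h h' heq
      simp only at heq
      -- memories agree from step k on
      have hmem : ∀ j, k ≤ j → T.mem wV (wrd h) j = T.mem wV (wrd h') j := by
        intro j hj
        induction j with
        | zero =>
            have : k = 0 := by omega
            rw [this] at heq; exact heq
        | succ j ih =>
            rcases Nat.lt_or_ge k (j + 1) with hlt | hge
            · have hkj : k ≤ j := by omega
              have hw : wrd h j = wrd h' j := by
                funext x
                simp [hwrd, Nat.not_lt.mpr hkj]
              simp only [TGE.mem, ih hkj, hw]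
            · have : k = j + 1 := by omega
              rw [this] at heq; exact heq
      have hg : ∀ j, k ≤ j →
          T.guided wV (wrd h) j = T.guided wV (wrd h') j := by
        intro j hj
        have hw : wrd h j = wrd h' j := by
          funext x
          simp [hwrd, Nat.not_lt.mpr hj]
        simp only [TGE.guided, hmem j hj, hw]
      funext t
      have s1 := (sat_phi3_iff k _).mp (hT wV (wrd h)) t
      have s2 := (sat_phi3_iff k _).mp (hT wV (wrd h')) t
      have hcl : ∀ (w : ℕ → Set Unit) j,
          (Sum.inl (Sum.inr ()) ∈ T.comp wV w j ↔ () ∈ w j) := by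
        intro w j; simp [TGE.comp, exists_unit_mem]
      have hcr : ∀ (w : ℕ → Set Unit) j,
          (Sum.inr (Sum.inr ()) ∈ T.comp wV w j ↔ () ∈ T.guided wV w j) := by
        intro w j; simp [TGE.comp, exists_unit_mem]
      rw [hcl, hcr] at s1 s2
      rw [hg (t + k) (by omega)] at s1
      have : (() ∈ wrd h t) ↔ (() ∈ wrd h' t) := s1.trans s2.symm
      rw [hmemw, hmemw] at this
      have ht : (t : ℕ) < k := t.isLt
      by_cases hb : h ⟨t, ht⟩ = true
      · have := this.mp ⟨ht, by simpa using hb⟩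
        obtain ⟨_, hb'⟩ := this
        simp only [Fin.eta] at hb hb' ⊢
        rw [hb, hb']
      · by_cases hb' : h' ⟨t, ht⟩ = true
        · have := this.mpr ⟨ht, by simpa using hb'⟩
          obtain ⟨_, hc⟩ := this
          simp only [Fin.eta] at hc
          exact absurd hc hb
        · simp only [Fin.eta] at hb hb' ⊢
          simp [Bool.not_eq_true] at hb hb'
          rw [hb, hb']
    calc 2 ^ k = Fintype.card (Fin k → Bool) := by simp
      _ ≤ Fintype.card M := Fintype.card_le_of_injective _ key
end

section
/- For every m ≥ 2 and 0 ≤ j ≤ m, the specification φ_m = ψ₀ ∨ ψ₁ ∨ ⋯ ∨ ψ_m, where ψ_j = G(i ↔ X^j o_j), is (∅, {i}, {o₀,…,o_{j-1}}, {o_j,…,o_m})-realizable by a TGE with environment memory 2^j, but is not so realizable with environment memory 2^j − 1. In particular, guiding fewer output signals may strictly increase the required environment memory. -/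
/-- The hidden input signal `i`. -/
def iAtom6 (m j : ℕ) : (Empty ⊕ Unit) ⊕ (Fin j ⊕ Fin (m+1-j)) :=
  Sum.inl (Sum.inr ())

/-- The output signal `o_l`: controlled if `l < j`, guided otherwise. -/
def oAtom6 (m j l : ℕ) (hl : l ≤ m) (hj : j ≤ m) :
    (Empty ⊕ Unit) ⊕ (Fin j ⊕ Fin (m+1-j)) :=
  if h : l < j then Sum.inr (Sum.inl ⟨l, h⟩)
  else Sum.inr (Sum.inr ⟨l - j, by omega⟩)

/-- `φ_m = ψ₀ ∨ ⋯ ∨ ψ_m` where `ψ_l = G(i ↔ X^l o_l)`, with `i` hidden,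
outputs `o₀,…,o_{j-1}` controlled and `o_j,…,o_m` guided. -/
def phi6 (m j : ℕ) (hj : j ≤ m) :
    LTL ((Empty ⊕ Unit) ⊕ (Fin j ⊕ Fin (m+1-j))) :=
  (List.range (m+1)).attach.foldr
    (fun l acc =>
      LTL.or
        (LTL.G (LTL.iff_ (LTL.atom (iAtom6 m j))
          (LTL.Xpow l.1 (LTL.atom (oAtom6 m j l.1
            (by have := l.2; rw [List.mem_range] at this; omega) hj)))))
        acc)
    LTL.ff

namespace LTL

variable {α : Type}

theorem satAt_G {w : ℕ → Set α} {t : ℕ} {φ : LTL α} :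
    satAt w t (G φ) ↔ ∀ k, t ≤ k → satAt w k φ := by
  simp only [G, F, satAt]
  constructor
  · intro h k hk
    by_contra hc
    exact h ⟨k, hk, hc, fun _ _ _ => trivial⟩
  · rintro h ⟨k, hk, hc, -⟩
    exact hc (h k hk)

theorem satAt_Xpow {w : ℕ → Set α} {φ : LTL α} :
    ∀ (k t : ℕ), satAt w t (Xpow k φ) ↔ satAt w (t + k) φ := by
  intro k
  induction k with
  | zero => intro t; simp [Xpow]
  | succ k ih =>
    intro t
    have h2 : t + (k + 1) = (t + 1) + k := by omega
    rw [h2]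
    exact ih (t+1)

theorem satAt_iff_ {w : ℕ → Set α} {t : ℕ} {φ ψ : LTL α} :
    satAt w t (iff_ φ ψ) ↔ (satAt w t φ ↔ satAt w t ψ) := by
  simp only [iff_, satAt]; tauto

theorem satAt_foldr_or {β : Type} (L : List β) (f : β → LTL α) (w : ℕ → Set α) (t : ℕ) :
    satAt w t (L.foldr (fun x acc => LTL.or (f x) acc) LTL.ff) ↔ ∃ x ∈ L, satAt w t (f x) := by
  induction L with
  | nil => simp [satAt]
  | cons a L ih => simp [satAt, ih]

end LTL

theorem sat_phi6 {m j : ℕ} (hj : j ≤ m) (w : ℕ → Set ((Empty ⊕ Unit) ⊕ (Fin j ⊕ Fin (m+1-j)))) :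
    LTL.sat w (phi6 m j hj) ↔
      ∃ l, ∃ hl : l ≤ m, ∀ t, (iAtom6 m j ∈ w t ↔ oAtom6 m j l hl hj ∈ w (t + l)) := by
  rw [LTL.sat, phi6, LTL.satAt_foldr_or]
  constructor
  · rintro ⟨x, -, hx⟩
    have hl : x.1 ≤ m := by have := x.2; rw [List.mem_range] at this; omega
    refine ⟨x.1, hl, ?_⟩
    rw [LTL.satAt_G] at hx
    intro t
    have h2 := hx t (Nat.zero_le _)
    rw [LTL.satAt_iff_, LTL.satAt_Xpow] at h2
    exact h2
  · rintro ⟨l, hl, h⟩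
    refine ⟨⟨l, by rw [List.mem_range]; omega⟩, List.mem_attach _ _, ?_⟩
    rw [LTL.satAt_G]
    intro k _
    rw [LTL.satAt_iff_, LTL.satAt_Xpow]
    exact h k
section CompMem

variable {ν η γc γg S M : Type} (T : TGE ν η γc γg S M) (wV : ℕ → Set ν) (wH : ℕ → Set η) (t : ℕ)

theorem mem_comp_i (x : η) :
    (Sum.inl (Sum.inr x) : (ν ⊕ η) ⊕ (γc ⊕ γg)) ∈ T.comp wV wH t ↔ x ∈ wH t := by
  simp [TGE.comp]

theorem mem_comp_c (c : γc) :
    (Sum.inr (Sum.inl c) : (ν ⊕ η) ⊕ (γc ⊕ γg)) ∈ T.comp wV wH t ↔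
      c ∈ (T.out (T.run wV t) (wV t)).1 := by
  simp [TGE.comp]

theorem mem_comp_g (g : γg) :
    (Sum.inr (Sum.inr g) : (ν ⊕ η) ⊕ (γc ⊕ γg)) ∈ T.comp wV wH t ↔
      g ∈ T.guided wV wH t := by
  simp [TGE.comp]

end CompMem

open Classical in
noncomputable def bitOf (h : Set Unit) : Bool := decide (() ∈ h)

theorem bitOf_iff {h : Set Unit} : bitOf h = true ↔ () ∈ h := by
  simp [bitOf]

noncomputable def enc6 (j : ℕ) : (Fin j → Bool) ≃ Fin (2^j) :=
  Fintype.equivFinOfCardEq (by simp)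

/-- The upper-bound transducer: memory stores the last `j` hidden bits. -/
noncomputable def upT (m j : ℕ) (hj : j ≤ m) :
    TGE Empty Unit (Fin j) (Fin (m+1-j)) Unit (Fin (2^j)) where
  init := ()
  m0 := enc6 j (fun _ => false)
  trans := fun _ _ => ()
  out := fun _ _ =>
    (∅, fun mm h =>
      (enc6 j (fun r => if r.1 = 0 then bitOf h else
          (enc6 j).symm mm ⟨r.1 - 1, by have := r.2; omega⟩),
       if (if h0 : j = 0 then bitOf h else (enc6 j).symm mm ⟨j - 1, by omega⟩) = true
       then {⟨0, by omega⟩} else ∅))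

theorem upT_mem (m j : ℕ) (hj : j ≤ m) (wV : ℕ → Set Empty) (wH : ℕ → Set Unit) :
    ∀ t (r : Fin j), r.1 < t →
      (enc6 j).symm ((upT m j hj).mem wV wH t) r = bitOf (wH (t - 1 - r.1)) := by
  intro t
  induction t with
  | zero => intro r hr; omega
  | succ t ih =>
    intro r hr
    show (enc6 j).symm (((upT m j hj).out _ _).2 ((upT m j hj).mem wV wH t) (wH t)).1 r = _
    rw [show (((upT m j hj).out ((upT m j hj).run wV t) (wV t)).2
        ((upT m j hj).mem wV wH t) (wH t)).1
      = enc6 j (fun r => if r.1 = 0 then bitOf (wH t) else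
          (enc6 j).symm ((upT m j hj).mem wV wH t) ⟨r.1 - 1, by have := r.2; omega⟩) from rfl]
    rw [Equiv.symm_apply_apply]
    show (if r.1 = 0 then bitOf (wH t) else
        (enc6 j).symm ((upT m j hj).mem wV wH t) ⟨r.1 - 1, by have := r.2; omega⟩) = _
    by_cases h0 : r.1 = 0
    · rw [if_pos h0, show t + 1 - 1 - r.1 = t by omega]
    · rw [if_neg h0, ih ⟨r.1 - 1, by have := r.2; omega⟩ (by show r.1 - 1 < t; omega),
        show t - 1 - (r.1 - 1) = t + 1 - 1 - r.1 by omega]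

theorem upT_guided (m j : ℕ) (hj : j ≤ m) (wV : ℕ → Set Empty) (wH : ℕ → Set Unit) (t : ℕ)
    (g : Fin (m+1-j)) (hg : g.1 = 0) :
    g ∈ (upT m j hj).guided wV wH (t + j) ↔ () ∈ wH t := by
  show g ∈ (((upT m j hj).out _ _).2 ((upT m j hj).mem wV wH (t+j)) (wH (t+j))).2 ↔ _
  rw [show (((upT m j hj).out ((upT m j hj).run wV (t+j)) (wV (t+j))).2
      ((upT m j hj).mem wV wH (t+j)) (wH (t+j))).2
    = (if (if h0 : j = 0 then bitOf (wH (t+j)) else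
          (enc6 j).symm ((upT m j hj).mem wV wH (t+j)) ⟨j - 1, by omega⟩) = true
       then {⟨0, by omega⟩} else (∅ : Set (Fin (m+1-j)))) from rfl]
  by_cases h0 : j = 0
  · subst h0
    rw [dif_pos rfl]
    by_cases hb : bitOf (wH (t+0)) = true
    · rw [if_pos hb]
      simp only [Set.mem_singleton_iff]
      constructor
      · intro _; rw [← bitOf_iff]; simpa using hb
      · intro _; exact Fin.ext (by simpa using hg)
    · rw [if_neg hb]
      simp only [Set.mem_empty_iff_false, false_iff]
      intro hmem
      exact hb (by rw [bitOf_iff]; simpa using hmem)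
  · rw [dif_neg h0]
    rw [upT_mem m j hj wV wH (t+j) ⟨j-1, by omega⟩ (by omega)]
    have harg : t + j - 1 - (j - 1) = t := by omega
    rw [harg]
    by_cases hb : bitOf (wH t) = true
    · rw [if_pos hb]
      simp only [Set.mem_singleton_iff]
      constructor
      · intro _; exact bitOf_iff.mp hb
      · intro _; exact Fin.ext (by simpa using hg)
    · rw [if_neg hb]
      simp only [Set.mem_empty_iff_false, false_iff]
      intro hmem
      exact hb (bitOf_iff.mpr hmem)

theorem upT_realizes (m j : ℕ) (hj : j ≤ m) : (upT m j hj).Realizes (phi6 m j hj) := by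
  intro wV wH
  rw [sat_phi6]
  refine ⟨j, hj, ?_⟩
  intro t
  rw [show iAtom6 m j = Sum.inl (Sum.inr ()) from rfl, mem_comp_i]
  have ho : oAtom6 m j j hj hj = Sum.inr (Sum.inr ⟨j - j, by omega⟩) := by
    rw [oAtom6, dif_neg (lt_irrefl j)]
  rw [ho, mem_comp_g, upT_guided m j hj wV wH t ⟨j - j, by omega⟩ (by show j - j = 0; omega)]
section Lower

def toH (w : ℕ → Bool) : ℕ → Set Unit := fun t => {_u | w t = true}

theorem mem_toH {w : ℕ → Bool} {t : ℕ} : () ∈ toH w t ↔ w t = true := Iff.rfl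

theorem toH_congr {w w' : ℕ → Bool} {t : ℕ} (h : w t = w' t) : toH w t = toH w' t := by
  unfold toH; rw [h]

variable {m j : ℕ} {S M : Type} (T : TGE Empty Unit (Fin j) (Fin (m+1-j)) S M)

def wV0 : ℕ → Set Empty := fun _ => ∅

/-- Memory only depends on the hidden inputs seen so far. -/
theorem mem_congr (wV : ℕ → Set Empty) {w w' : ℕ → Bool} {a : ℕ}
    (h : T.mem wV (toH w) a = T.mem wV (toH w') a) :
    ∀ b, a ≤ b → (∀ s, a ≤ s → s < b → w s = w' s) →
      T.mem wV (toH w) b = T.mem wV (toH w') b := by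
  intro b
  induction b with
  | zero =>
    intro hab _
    obtain rfl : a = 0 := Nat.le_zero.mp hab
    exact h
  | succ b ih =>
    intro hab hw
    rcases Nat.eq_or_lt_of_le hab with he | hlt
    · exact he ▸ h
    · have hab' : a ≤ b := by omega
      show ((T.out _ _).2 (T.mem wV (toH w) b) (toH w b)).1
        = ((T.out _ _).2 (T.mem wV (toH w') b) (toH w' b)).1
      rw [ih hab' (fun s hs hsb => hw s hs (by omega)), toH_congr (hw b hab' (by omega))]

theorem guided_congr (wV : ℕ → Set Empty) {w w' : ℕ → Bool} {t : ℕ}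
    (h : ∀ s, s ≤ t → w s = w' s) :
    T.guided wV (toH w) t = T.guided wV (toH w') t := by
  unfold TGE.guided
  rw [mem_congr T wV (w:=w) (w':=w') (a:=0) rfl t (Nat.zero_le _) (fun s _ hs => h s (by omega)),
    toH_congr (h t le_rfl)]

theorem comp_congr (wV : ℕ → Set Empty) {w w' : ℕ → Bool} {t : ℕ}
    (h : ∀ s, s ≤ t → w s = w' s) :
    T.comp wV (toH w) t = T.comp wV (toH w') t := by
  unfold TGE.comp
  rw [guided_congr T wV h, toH_congr (h t le_rfl)]

/-- The extension lemma: with memory `< 2^l`, a violation of `ψ_l` (guided case)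
can be forced beyond any frontier. -/
theorem ext_lemma [Fintype M] (hcard : Fintype.card M = 2 ^ j - 1) (wV : ℕ → Set Empty)
    {l : ℕ} (hl : j ≤ l) (g : Fin (m+1-j)) (N : ℕ) (p : ℕ → Bool) :
    ∃ w' : ℕ → Bool, (∀ s, s < N → w' s = p s) ∧
      ∃ t, N ≤ t ∧ ¬ (w' t = true ↔ g ∈ T.guided wV (toH w') (t + l)) := by
  by_contra hc
  push_neg at hc
  -- every extension satisfies every constraint on `ψ_l`
  set W : (Fin l → Bool) → ℕ → Bool := fun x s =>
    if hs : s < N then p s else if hs2 : s - N < l then x ⟨s - N, hs2⟩ else false with hW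
  have hWp : ∀ x, ∀ s, s < N → W x s = p s := by
    intro x s hs; simp only [hW, dif_pos hs]
  have hWval : ∀ x (r : Fin l), W x (N + r.1) = x r := by
    intro x r
    simp only [hW]
    rw [dif_neg (by omega), dif_pos (by show N + r.1 - N < l; omega)]
    congr 1
    exact Fin.ext (by show N + r.1 - N = r.1; omega)
  have hWtail : ∀ x s, N + l ≤ s → W x s = false := by
    intro x s hs
    simp only [hW]
    rw [dif_neg (by omega), dif_neg (by omega)]
  have hinj : Function.Injective (fun x => T.mem wV (toH (W x)) (N + l)) := by
    intro x y hxy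
    funext r
    have hmem : ∀ b, N + l ≤ b → T.mem wV (toH (W x)) b = T.mem wV (toH (W y)) b :=
      fun b hb => mem_congr T wV hxy b hb
        (fun s hs _ => (hWtail x s hs).trans (hWtail y s hs).symm)
    have hgb : T.guided wV (toH (W x)) (N + r.1 + l) = T.guided wV (toH (W y)) (N + r.1 + l) := by
      unfold TGE.guided
      rw [hmem (N + r.1 + l) (by omega),
        toH_congr ((hWtail x _ (by omega)).trans (hWtail y _ (by omega)).symm)]
    have hx := hc (W x) (hWp x) (N + r.1) (by omega)
    have hy := hc (W y) (hWp y) (N + r.1) (by omega)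
    rw [hWval x r] at hx
    rw [hWval y r] at hy
    rw [show N + r.1 + l = N + r.1 + l from rfl] at hx hy
    have : (x r = true) ↔ (y r = true) := by
      rw [hx, hy, hgb]
    cases hxr : x r <;> cases hyr : y r <;> simp_all
  have hcard2 := Fintype.card_le_of_injective _ hinj
  rw [hcard] at hcard2
  have h1 : Fintype.card (Fin l → Bool) = 2 ^ l := by simp
  have h2 : (2:ℕ) ^ j ≤ 2 ^ l := Nat.pow_le_pow_right (by omega) hl
  have h3 : (1:ℕ) ≤ 2 ^ j := Nat.one_le_two_pow
  omega

end Lower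
section Main

variable {m j : ℕ} {S M : Type} (T : TGE Empty Unit (Fin j) (Fin (m+1-j)) S M)

theorem main_lemma [Fintype M] (hcard : Fintype.card M = 2 ^ j - 1) (hjm : j ≤ m)
    (wV : ℕ → Set Empty) :
    ∀ k, ∃ N, ∃ p : ℕ → Bool, ∀ l (hl : l ≤ m), l < k →
      ∃ t, t + l < N ∧ ¬ (p t = true ↔ oAtom6 m j l hl hjm ∈ T.comp wV (toH p) (t + l)) := by
  intro k
  induction k with
  | zero => exact ⟨0, fun _ => false, fun l hl hlk => absurd hlk (by omega)⟩
  | succ k ih =>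
    obtain ⟨N, p, hp⟩ := ih
    by_cases hk : k ≤ m
    · by_cases hkj : k < j
      · -- controlled output: the system is blind, negate the fixed bit
        classical
        refine ⟨N + k + 1,
          fun s => if s = N then !(decide ((⟨k, hkj⟩ : Fin j) ∈
            (T.out (T.run wV (N+k)) (wV (N+k))).1)) else p s, ?_⟩
        intro l hl hlk
        rcases Nat.lt_or_ge l k with hlt | hge
        · obtain ⟨t, htN, hviol⟩ := hp l hl hlt
          refine ⟨t, by omega, ?_⟩
          have hagree : ∀ s, s ≤ t + l →
              (fun s => if s = N then !(decide ((⟨k, hkj⟩ : Fin j) ∈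
                (T.out (T.run wV (N+k)) (wV (N+k))).1)) else p s) s = p s :=
            fun s hs => if_neg (by omega)
          rw [comp_congr T wV hagree]
          show ¬ ((if t = N then _ else p t) = true ↔ _)
          rw [if_neg (by omega : ¬ t = N)]
          exact hviol
        · have hlk' : l = k := by omega
          subst hlk'
          refine ⟨N, by omega, ?_⟩
          show ¬ ((if N = N then _ else p N) = true ↔ _)
          rw [if_pos rfl]
          have ho : oAtom6 m j l hl hjm = Sum.inr (Sum.inl ⟨l, hkj⟩) := by
            rw [oAtom6, dif_pos hkj]
          rw [ho, mem_comp_c]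
          by_cases hC : (⟨l, hkj⟩ : Fin j) ∈ (T.out (T.run wV (N+l)) (wV (N+l))).1 <;>
            simp [hC]
      · -- guided output: apply the extension lemma
        have hjk : j ≤ k := by omega
        obtain ⟨w', hw'p, t, htN, hviol⟩ :=
          ext_lemma T hcard wV hjk (⟨k - j, by omega⟩ : Fin (m+1-j)) N p
        refine ⟨t + k + 1, w', ?_⟩
        intro l hl hlk
        rcases Nat.lt_or_ge l k with hlt | hge
        · obtain ⟨t', ht', hviol'⟩ := hp l hl hlt
          refine ⟨t', by omega, ?_⟩
          have hagree : ∀ s, s ≤ t' + l → w' s = p s := fun s hs => hw'p s (by omega)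
          rw [comp_congr T wV hagree, hagree t' (by omega)]
          exact hviol'
        · have hlk' : l = k := by omega
          subst hlk'
          refine ⟨t, by omega, ?_⟩
          have ho : oAtom6 m j l hl hjm = Sum.inr (Sum.inr ⟨l - j, by omega⟩) := by
            rw [oAtom6, dif_neg hkj]
          rw [ho, mem_comp_g]
          exact hviol
    · exact ⟨N, p, fun l hl hlk => hp l hl (by omega)⟩

end Main
/-- `φ_m` is `(∅,{i},{o₀,…,o_{j-1}},{o_j,…,o_m})`-realizable with
environment memory `2^j`, but not with environment memory `2^j − 1`. -/
theorem stmt6 (m j : ℕ) (hm : 2 ≤ m) (hj : j ≤ m) :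
    (∃ (S : Type) (T : TGE Empty Unit (Fin j) (Fin (m+1-j)) S (Fin (2 ^ j))),
        T.Realizes (phi6 m j hj)) ∧
    (∀ (S M : Type) [Fintype M], Fintype.card M = 2 ^ j - 1 →
        ∀ T : TGE Empty Unit (Fin j) (Fin (m+1-j)) S M,
          ¬ T.Realizes (phi6 m j hj)) := by
  constructor
  · exact ⟨Unit, upT m j hj, upT_realizes m j hj⟩
  · intro S M instM hcard T hreal
    obtain ⟨N, p, hp⟩ := main_lemma T hcard hj wV0 (m + 1)
    have hs := hreal wV0 (toH p)
    rw [sat_phi6] at hs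
    obtain ⟨l, hl, hsat⟩ := hs
    obtain ⟨t, htN, hviol⟩ := hp l hl (by omega)
    apply hviol
    have h2 := hsat t
    rw [show iAtom6 m j = Sum.inl (Sum.inr ()) from rfl, mem_comp_i] at h2
    exact h2
end

section
/- If an LTL specification φ is (V, H, C, G)-realizable by some TGE with memory set M, then it is (V, H, C, G)-realizable by a TGE (with the same state space and memory set) that uses only programs tight for φ, i.e., programs p : M × 2^H → M × 2^G satisfying p(m, h) = p(m, h') whenever the hidden assignments h and h' agree on all formulas in cl_H(φ). -/
/-- Which atoms are hidden input signals. -/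
def isHidden {ν η γc γg : Type} : (ν ⊕ η) ⊕ (γc ⊕ γg) → Bool
  | Sum.inl (Sum.inr _) => true
  | _ => false

/-- The letter induced by a hidden assignment `h ∈ 2^H`. -/
def hLetter {ν η γc γg : Type} (h : Set η) : Set ((ν ⊕ η) ⊕ (γc ⊕ γg)) :=
  Sum.inl '' (Sum.inr '' h)

/-!
A tight program is obtained by precomposing every program with a map `rep` that sends a hidden
assignment to a canonical assignment satisfying the same formulas of `cl_H(φ)`. On each visible
input word `wV` and hidden word `wH`, the new TGE produces, outside the hidden signals, exactly the
computation of the old one on `wV` and `rep ∘ wH`. The two computations satisfy the same formulas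
of `cl_H(φ)` at every position, hence the same formulas of `prop(φ)`: each formula of `prop(φ)` is a
Boolean combination of formulas of `cl_H(φ)` and of atoms that are not hidden. So they agree on `φ`.
-/

namespace LTL

variable {α : Type} {p : α → Bool}

theorem satAt_iff_propSat_of_temporalFree {w : ℕ → Set α} {θ : LTL α} (hθ : θ.temporalFree)
    (j : ℕ) : satAt w j θ ↔ propSat (w j) θ := by
  induction θ with
  | tt | ff | atom => exact Iff.rfl
  | not θ ih => exact (ih hθ).not
  | and θ ψ ihθ ihψ =>
    simp only [temporalFree, Bool.and_eq_true] at hθ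
    exact and_congr (ihθ hθ.1) (ihψ hθ.2)
  | or θ ψ ihθ ihψ =>
    simp only [temporalFree, Bool.and_eq_true] at hθ
    exact or_congr (ihθ hθ.1) (ihψ hθ.2)
  | next | untl => cases hθ

theorem props_eq_singleton_of_temporalFree {θ : LTL α} (hθ : θ.temporalFree) :
    props θ = [θ] := by
  cases θ <;> simp_all [props, temporalFree]

theorem temporalFree_of_mem_props {φ θ : LTL α} (hθ : θ ∈ props φ) : θ.temporalFree := by
  induction φ with
  | tt | ff | atom => simp_all [props, temporalFree]
  | not φ ih =>
    rw [props] at hθ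
    split_ifs at hθ with hT
    · simp_all
    · exact ih hθ
  | and φ ψ ihφ ihψ | or φ ψ ihφ ihψ =>
    rw [props] at hθ
    split_ifs at hθ with hT
    · simp_all
    · exact (List.mem_append.1 hθ).elim ihφ ihψ
  | next φ ih => exact ih hθ
  | untl φ ψ ihφ ihψ => exact (List.mem_append.1 hθ).elim ihφ ihψ

theorem satAt_congr_of_temporalFree {w w' : ℕ → Set α} {θ : LTL α} (hθ : θ.temporalFree)
    (hp : ∀ j, ∀ ψ ∈ props θ, propSat (w j) ψ ↔ propSat (w' j) ψ) (j : ℕ) :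
    satAt w j θ ↔ satAt w' j θ := by
  rw [satAt_iff_propSat_of_temporalFree hθ, satAt_iff_propSat_of_temporalFree hθ]
  exact hp j θ (by simp [props_eq_singleton_of_temporalFree hθ])

theorem satAt_congr_props {w w' : ℕ → Set α} {φ : LTL α}
    (hp : ∀ j, ∀ θ ∈ props φ, propSat (w j) θ ↔ propSat (w' j) θ) (j : ℕ) :
    satAt w j φ ↔ satAt w' j φ := by
  induction φ generalizing j with
  | tt | ff => exact Iff.rfl
  | atom a => exact hp j (.atom a) (List.mem_singleton_self _)
  | not φ ih =>
    by_cases hT : (LTL.not φ).temporalFree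
    · exact satAt_congr_of_temporalFree hT hp j
    · rw [props, if_neg hT] at hp
      exact (ih hp j).not
  | and φ ψ ihφ ihψ =>
    by_cases hT : (LTL.and φ ψ).temporalFree
    · exact satAt_congr_of_temporalFree hT hp j
    · simp only [props, if_neg hT, List.mem_append] at hp
      exact and_congr (ihφ (fun k θ hθ => hp k θ (.inl hθ)) j)
        (ihψ (fun k θ hθ => hp k θ (.inr hθ)) j)
  | or φ ψ ihφ ihψ =>
    by_cases hT : (LTL.or φ ψ).temporalFree
    · exact satAt_congr_of_temporalFree hT hp j
    · simp only [props, if_neg hT, List.mem_append] at hp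
      exact or_congr (ihφ (fun k θ hθ => hp k θ (.inl hθ)) j)
        (ihψ (fun k θ hθ => hp k θ (.inr hθ)) j)
  | next φ ih => exact ih hp (j + 1)
  | untl φ ψ ihφ ihψ =>
    simp only [props, List.mem_append] at hp
    have hφ := ihφ fun k θ hθ => hp k θ (.inl hθ)
    have hψ := ihψ fun k θ hθ => hp k θ (.inr hθ)
    exact exists_congr fun k => and_congr_right' <| and_congr (hψ k) <|
      forall_congr' fun l => imp_congr_right fun _ => imp_congr_right fun _ => hφ l

theorem satAt_congr_of_atomsAll {w w' : ℕ → Set α} {ζ : LTL α}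
    (hw : ∀ j a, p a = true → (a ∈ w j ↔ a ∈ w' j)) (hζ : atomsAll p ζ) (j : ℕ) :
    satAt w j ζ ↔ satAt w' j ζ := by
  induction ζ generalizing j with
  | tt | ff => exact Iff.rfl
  | atom a => exact hw j a hζ
  | not ζ ih => exact (ih hζ j).not
  | and ζ ξ ihζ ihξ =>
    simp only [atomsAll, Bool.and_eq_true] at hζ
    exact and_congr (ihζ hζ.1 j) (ihξ hζ.2 j)
  | or ζ ξ ihζ ihξ =>
    simp only [atomsAll, Bool.and_eq_true] at hζ
    exact or_congr (ihζ hζ.1 j) (ihξ hζ.2 j)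
  | next ζ ih => exact ih hζ (j + 1)
  | untl ζ ξ ihζ ihξ =>
    simp only [atomsAll, Bool.and_eq_true] at hζ
    exact exists_congr fun k => and_congr_right' <| and_congr (ihξ hζ.2 k) <|
      forall_congr' fun l => imp_congr_right fun _ => imp_congr_right fun _ => ihζ hζ.1 l

theorem atomsAll_of_mem_clP {θ ζ : LTL α} (hζ : ζ ∈ clP p θ) : atomsAll p ζ := by
  induction θ with
  | tt | ff => simp [clP] at hζ
  | atom a =>
    rw [clP] at hζ
    split_ifs at hζ with ha
    · simp_all [atomsAll]
    · simp at hζ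
  | not θ ih =>
    rw [clP] at hζ
    split_ifs at hζ with hA
    · simp_all
    · exact ih hζ
  | and θ ψ ihθ ihψ | or θ ψ ihθ ihψ =>
    rw [clP] at hζ
    split_ifs at hζ with hA
    · simp_all
    · exact (List.mem_append.1 hζ).elim ihθ ihψ
  | next θ ih => exact ih hζ
  | untl θ ψ ihθ ihψ => exact (List.mem_append.1 hζ).elim ihθ ihψ

theorem mem_clH_iff {φ ζ : LTL α} : ζ ∈ clH p φ ↔ ∃ θ ∈ props φ, ζ ∈ clP p θ := by
  rw [clH]
  induction props φ with
  | nil => simp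
  | cons θ l ih => simp

theorem atomsAll_of_mem_clH {φ ζ : LTL α} (hζ : ζ ∈ clH p φ) : atomsAll p ζ :=
  let ⟨_, _, hζθ⟩ := mem_clH_iff.1 hζ
  atomsAll_of_mem_clP hζθ

theorem propSat_congr_clP {σ σ' : Set α} {θ : LTL α}
    (hσ : ∀ a, p a = false → (a ∈ σ ↔ a ∈ σ')) (hθ : θ.temporalFree)
    (hcl : ∀ ζ ∈ clP p θ, propSat σ ζ ↔ propSat σ' ζ) : propSat σ θ ↔ propSat σ' θ := by
  induction θ with
  | tt | ff => exact Iff.rfl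
  | atom a =>
    by_cases ha : p a = true
    · exact hcl _ (by simp [clP, ha])
    · exact hσ a (by simpa using ha)
  | not θ ih =>
    by_cases hA : atomsAll p (LTL.not θ)
    · exact hcl _ (by simp [clP, hA])
    · rw [clP, if_neg hA] at hcl
      exact (ih hθ hcl).not
  | and θ ψ ihθ ihψ =>
    simp only [temporalFree, Bool.and_eq_true] at hθ
    by_cases hA : atomsAll p (LTL.and θ ψ)
    · exact hcl _ (by simp [clP, hA])
    · simp only [clP, if_neg hA, List.mem_append] at hcl
      exact and_congr (ihθ hθ.1 fun ζ hζ => hcl ζ (.inl hζ))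
        (ihψ hθ.2 fun ζ hζ => hcl ζ (.inr hζ))
  | or θ ψ ihθ ihψ =>
    simp only [temporalFree, Bool.and_eq_true] at hθ
    by_cases hA : atomsAll p (LTL.or θ ψ)
    · exact hcl _ (by simp [clP, hA])
    · simp only [clP, if_neg hA, List.mem_append] at hcl
      exact or_congr (ihθ hθ.1 fun ζ hζ => hcl ζ (.inl hζ))
        (ihψ hθ.2 fun ζ hζ => hcl ζ (.inr hζ))
  | next | untl => cases hθ

theorem satAt_congr_clH {w w' : ℕ → Set α} {φ : LTL α}
    (hw : ∀ j a, p a = false → (a ∈ w j ↔ a ∈ w' j))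
    (hcl : ∀ j, ∀ ζ ∈ clH p φ, propSat (w j) ζ ↔ propSat (w' j) ζ) (j : ℕ) :
    satAt w j φ ↔ satAt w' j φ :=
  satAt_congr_props (fun k θ hθ => propSat_congr_clP (hw k) (temporalFree_of_mem_props hθ)
    fun ζ hζ => hcl k ζ (mem_clH_iff.2 ⟨θ, hθ, hζ⟩)) j

end LTL

/-- `clHType φ h₁ = clHType φ h₂` is the paper's `h₁ ≈_{cl_H(φ)} h₂`. -/
def clHType {ν η γc γg : Type} (φ : LTL ((ν ⊕ η) ⊕ (γc ⊕ γg))) (h : Set η) :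
    Set (LTL ((ν ⊕ η) ⊕ (γc ⊕ γg))) :=
  {θ | θ ∈ LTL.clH isHidden φ ∧ LTL.propSat (hLetter h) θ}

theorem clHType_eq_clHType_iff {ν η γc γg : Type} {φ : LTL ((ν ⊕ η) ⊕ (γc ⊕ γg))}
    {h₁ h₂ : Set η} :
    clHType φ h₁ = clHType φ h₂ ↔ ∀ θ ∈ LTL.clH isHidden φ,
      (LTL.propSat (hLetter (ν := ν) (γc := γc) (γg := γg) h₁) θ ↔
        LTL.propSat (hLetter (ν := ν) (γc := γc) (γg := γg) h₂) θ) := by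
  simp [clHType, Set.ext_iff]

namespace TGE

variable {ν η γc γg S M : Type}

def comapHidden (T : TGE ν η γc γg S M) (f : Set η → Set η) : TGE ν η γc γg S M where
  init := T.init
  m0 := T.m0
  trans := T.trans
  out s v := ((T.out s v).1, fun m h => (T.out s v).2 m (f h))

section

variable {T : TGE ν η γc γg S M} {f : Set η → Set η} {wV : ℕ → Set ν} {wH : ℕ → Set η}

theorem run_comapHidden : (T.comapHidden f).run wV = T.run wV := by
  funext j
  induction j with
  | zero => rfl
  | succ j ih => exact congrArg (T.trans · (wV j)) ih

theorem mem_comapHidden : (T.comapHidden f).mem wV wH = T.mem wV (f ∘ wH) := by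
  funext j
  induction j with
  | zero => rfl
  | succ j ih =>
    simp only [mem, ih, run_comapHidden]
    rfl

theorem mem_comp_comapHidden_iff {j : ℕ} {a : (ν ⊕ η) ⊕ (γc ⊕ γg)} (ha : isHidden a = false) :
    a ∈ (T.comapHidden f).comp wV wH j ↔ a ∈ T.comp wV (f ∘ wH) j := by
  rcases a with (x | e) | (c | g)
  · simp [comp]
  · simp [isHidden] at ha
  all_goals
    simp only [comp, guided, run_comapHidden, mem_comapHidden]
    simp [comapHidden]

theorem mem_comp_iff_mem_hLetter {j : ℕ} {a : (ν ⊕ η) ⊕ (γc ⊕ γg)} (ha : isHidden a = true) :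
    a ∈ T.comp wV wH j ↔ a ∈ hLetter (wH j) := by
  rcases a with (x | e) | (c | g) <;> simp_all [isHidden, comp, hLetter]

theorem propSat_comp_iff_propSat_hLetter {j : ℕ} {ζ : LTL ((ν ⊕ η) ⊕ (γc ⊕ γg))}
    (hζ : ζ.atomsAll isHidden) :
    LTL.propSat (T.comp wV wH j) ζ ↔ LTL.propSat (hLetter (wH j)) ζ :=
  LTL.satAt_congr_of_atomsAll (fun _ _ ha => mem_comp_iff_mem_hLetter ha) hζ 0

end

theorem realizes_comapHidden {φ : LTL ((ν ⊕ η) ⊕ (γc ⊕ γg))} {T : TGE ν η γc γg S M}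
    {f : Set η → Set η} (hT : T.Realizes φ) (hf : ∀ h, clHType φ (f h) = clHType φ h) :
    (T.comapHidden f).Realizes φ := by
  intro wV wH
  refine (LTL.satAt_congr_clH (w' := T.comp wV (f ∘ wH))
    (fun _ _ ha => mem_comp_comapHidden_iff ha) (fun j ζ hζ => ?_) 0).2 (hT wV (f ∘ wH))
  have hA := LTL.atomsAll_of_mem_clH hζ
  rw [propSat_comp_iff_propSat_hLetter hA, propSat_comp_iff_propSat_hLetter hA]
  exact (clHType_eq_clHType_iff.1 (hf (wH j)) ζ hζ).symm

end TGE

/-- If `φ` is `(V,H,C,G)`-realizable by a TGE, then it is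
realizable (same state space and memory) by a TGE all of whose programs are
tight for `φ`: the program's value at `(m,h)` only depends on which formulas of
`cl_H(φ)` the hidden assignment `h` satisfies. -/
theorem stmt8 {ν η γc γg S M : Type} (φ : LTL ((ν ⊕ η) ⊕ (γc ⊕ γg)))
    (T : TGE ν η γc γg S M) (h : T.Realizes φ) :
    ∃ T' : TGE ν η γc γg S M, T'.Realizes φ ∧
      ∀ s v m (h₁ h₂ : Set η),
        (∀ θ ∈ LTL.clH isHidden φ,
            LTL.propSat (hLetter (ν := ν) (γc := γc) (γg := γg) h₁) θ ↔
            LTL.propSat (hLetter (ν := ν) (γc := γc) (γg := γg) h₂) θ) →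
        (T'.out s v).2 m h₁ = (T'.out s v).2 m h₂ := by
  let rep : Set η → Set η := Function.invFun (clHType φ) ∘ clHType φ
  refine ⟨T.comapHidden rep, TGE.realizes_comapHidden h fun x => Function.invFun_eq ⟨x, rfl⟩,
    fun s v m h₁ h₂ h₁₂ => ?_⟩
  show (T.out s v).2 m (rep h₁) = (T.out s v).2 m (rep h₂)
  rw [show rep h₁ = rep h₂ from congrArg (Function.invFun _) (clHType_eq_clHType_iff.2 h₁₂)]
end

section
/- Suppose a specification language L ⊆ (2^{I∪O})^ω is recognized by a deterministic parity word automaton D with state set Q. If L is (V, H, C, G)-realizable by some TGE with memory set M (of any size), then L is (V, H, C, G)-realizable by a TGE with the same state space whose memory set is Q. -/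
/-- A deterministic parity word automaton over alphabet `A`. -/
structure DPA (A Q : Type) where
  init : Q
  trans : Q → A → Q
  prio : Q → ℕ

namespace DPA

variable {A Q : Type}

def run (D : DPA A Q) (w : ℕ → A) : ℕ → Q
  | 0 => D.init
  | j+1 => D.trans (run D w j) (w j)

/-- Acceptance: the maximal priority visited infinitely often is even. -/
def Accepts (D : DPA A Q) (w : ℕ → A) : Prop :=
  Even (sSup (D.prio '' {q | ∀ N, ∃ n, N ≤ n ∧ D.run w n = q}))

/-- The language recognized by the automaton. -/
def lang (D : DPA A Q) : Set (ℕ → A) := {w | D.Accepts w}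

end DPA

/-!
The guided outputs of a TGE realizing `L(D)` form a winning strategy in the parity game on the
product of its `(V,C)`-projection with `D`: positions are pairs `(s, q)`, the opponent plays
visible and hidden inputs, the player answers with guided outputs, and `(s, q)` has the priority
of `q`. A positional winning strategy, depending only on `(s, q)` and the current inputs, is a
program with memory `Q` that tracks the automaton state itself.

A positional strategy is obtained from an arbitrary winning strategy `σ` by signatures. For odd
`c`, a node `x` of the strategy tree climbs over its ancestor `y` when every node after `y` on the
branch to `x` has priority at most `c` and one of them has priority `c`. This relation is
well-founded, since an infinite chain would be a branch consistent with `σ` on which `c` is the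
largest priority seen infinitely often. At each position keep a node whose tuple of ranks, read
from the highest priority down, is lexicographically least, and play as `σ` does there. Along a
play in which an odd `c` is eventually maximal, the ranks for the priorities `≥ c` then never
increase and strictly decrease whenever `c` is visited.
-/

open Filter List

/-- Parity condition on a sequence of priorities, phrased without a maximum so that it makes
sense for unbounded sequences as well. -/
def WinsParity (π : ℕ → ℕ) : Prop :=
  ∀ c, Odd c → (∃ᶠ j in atTop, π j = c) → ∃ c' > c, ∃ᶠ j in atTop, π j = c'

theorem Set.Finite.even_sSup_iff {X : Set ℕ} (hfin : X.Finite) (hne : X.Nonempty) :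
    Even (sSup X) ↔ ∀ c, Odd c → c ∈ X → ∃ c' > c, c' ∈ X := by
  have hmax : sSup X ∈ X := hne.csSup_mem hfin
  constructor
  · intro heven c hodd hc
    refine ⟨sSup X, lt_of_le_of_ne (le_csSup hfin.bddAbove hc) ?_, hmax⟩
    rintro rfl
    exact Nat.not_even_iff_odd.2 hodd heven
  · intro h
    by_contra hodd
    obtain ⟨c', hc', hc'X⟩ := h _ (Nat.not_even_iff_odd.1 hodd) hmax
    exact hc'.not_ge (le_csSup hfin.bddAbove hc'X)

theorem DPA.accepts_iff_winsParity {A Q : Type} [Finite Q] (D : DPA A Q) (w : ℕ → A) :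
    D.Accepts w ↔ WinsParity fun j => D.prio (D.run w j) := by
  have hX : D.prio '' {q | ∀ N, ∃ n, N ≤ n ∧ D.run w n = q} =
      {c | ∃ᶠ j in atTop, D.prio (D.run w j) = c} := by
    ext c
    simp only [Set.mem_image, Set.mem_ofPred_eq, ← frequently_atTop]
    constructor
    · rintro ⟨q, hq, rfl⟩
      exact hq.mono fun j hj => hj ▸ rfl
    · intro h
      obtain ⟨q, hq⟩ := frequently_exists.1
        (h.mono fun j hj => ⟨D.run w j, rfl, hj⟩ : ∃ᶠ j in atTop, ∃ q, D.run w j = q ∧ D.prio q = c)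
      exact ⟨q, hq.mono fun _ => And.left, hq.exists.elim fun _ => And.right⟩
  have hne : {c | ∃ᶠ j in atTop, D.prio (D.run w j) = c}.Nonempty := by
    obtain ⟨q, hq⟩ := frequently_exists.1
      (Frequently.of_forall fun j => ⟨D.run w j, rfl⟩ : ∃ᶠ j in atTop, ∃ q, D.run w j = q)
    exact ⟨D.prio q, hq.mono fun j hj => by rw [hj]⟩
  have hfin : {c | ∃ᶠ j in atTop, D.prio (D.run w j) = c}.Finite :=
    (Set.finite_range D.prio).subset fun c hc => hc.exists.elim fun j hj => ⟨_, hj⟩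
  rw [DPA.Accepts, hX, hfin.even_sSup_iff hne]
  rfl

theorem eventually_le_of_bounded_of_eventually_ne {π : ℕ → ℕ} {c d : ℕ} (hd : ∀ j, π j ≤ d)
    (h : ∀ c' > c, ∀ᶠ j in atTop, π j ≠ c') : ∀ᶠ j in atTop, π j ≤ c := by
  have hall : ∀ᶠ j in atTop, ∀ c' ∈ Finset.Ioc c d, π j ≠ c' :=
    (Finset.Ioc c d).eventually_all.2 fun c' hc' => h c' (Finset.mem_Ioc.1 hc').1
  filter_upwards [hall] with j hj
  by_contra hlt
  exact hj (π j) (Finset.mem_Ioc.2 ⟨by omega, hd j⟩) rfl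

theorem not_frequently_lt_of_eventually_le {α : Type*} [PartialOrder α] [WellFoundedLT α]
    {f : ℕ → α} (hf : ∀ᶠ j in atTop, f (j + 1) ≤ f j) : ¬∃ᶠ j in atTop, f (j + 1) < f j := by
  obtain ⟨N, hN⟩ := eventually_atTop.1 hf
  obtain ⟨n, hn⟩ := WellFoundedLT.antitone_chain_condition (f := fun k => f (N + k))
    (antitone_nat_of_succ_le fun k => hN (N + k) (by omega))
  rw [not_frequently]
  filter_upwards [eventually_ge_atTop (N + n)] with j hj
  have h₁ := hn (j - N) (by omega)
  have h₂ := hn (j + 1 - N) (by omega)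
  rw [show N + (j - N) = j by omega] at h₁
  rw [show N + (j + 1 - N) = j + 1 by omega] at h₂
  rw [← h₁, ← h₂]
  exact lt_irrefl _

theorem Acc.rank_le_rank_of_forall {α : Type*} {r : α → α → Prop} {a b : α} (ha : Acc r a)
    (hb : Acc r b) (h : ∀ c, r c a → r c b) : ha.rank ≤ hb.rank := by
  rw [ha.rank_eq, hb.rank_eq]
  exact Ordinal.iSup_le fun c =>
    Ordinal.le_iSup (fun c : {c // r c b} => Order.succ (hb.inv c.2).rank) ⟨c, h c c.2⟩

def truncate {α : Type*} [Zero α] {n : ℕ} (m : ℕ) (x : Fin n → α) : Fin n → α :=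
  fun i => if (i : ℕ) ≤ m then x i else 0

theorem toLex_truncate_le_toLex_truncate {α : Type*} [LinearOrder α] [Zero α] {n m : ℕ}
    {x y : Fin n → α} (h : toLex x ≤ toLex y) :
    toLex (truncate m x) ≤ toLex (truncate m y) := by
  obtain ⟨i, hagree, hlt⟩ | heq := h.lt_or_eq
  · by_cases him : (i : ℕ) ≤ m
    · refine le_of_lt ⟨i, fun j hj => ?_, ?_⟩
      · exact congrArg (fun v => if (j : ℕ) ≤ m then v else 0) (hagree j hj)
      · simpa only [truncate, Pi.toLex_apply, if_pos him] using hlt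
    · refine le_of_eq (congrArg toLex (funext fun j => ?_))
      unfold truncate
      split_ifs with hjm
      · exact hagree j (Fin.lt_def.2 (by omega))
      · rfl
  · rw [toLex_inj.1 heq]

namespace ParityGame

variable {P A B : Type}

/-- The first `j` letters of `wa`, most recent first. -/
def hist (wa : ℕ → A) : ℕ → List A
  | 0 => []
  | j + 1 => wa j :: hist wa j

@[simp] theorem length_hist (wa : ℕ → A) (j : ℕ) : (hist wa j).length = j := by
  induction j with
  | zero => rfl
  | succ j ih => simp [hist, ih]

theorem reverse_hist (wa : ℕ → A) (j : ℕ) : (hist wa j).reverse = (List.range j).map wa := by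
  induction j with
  | zero => rfl
  | succ j ih => simp [hist, ih, List.range_succ]

theorem hist_suffix_hist (wa : ℕ → A) {j m : ℕ} (h : j ≤ m) : hist wa j <:+ hist wa m := by
  induction m, h using Nat.le_induction with
  | base => exact suffix_refl _
  | succ m _ ih => exact ih.trans (suffix_cons _ _)

theorem eq_hist_of_suffix {wa : ℕ → A} {z : List A} {m : ℕ} (h : z <:+ hist wa m) :
    z = hist wa z.length := by
  induction m with
  | zero => simp_all [hist]
  | succ m ih =>
    rcases suffix_cons_iff.1 h with rfl | h
    · simp [hist]
    · exact ih h

theorem exists_hist_eq_of_suffix_chain {g : ℕ → List A} (hg : ∀ n, g n <:+ g (n + 1))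
    (hlen : ∀ n, n ≤ (g n).length) : ∃ wa : ℕ → A, ∀ n, hist wa (g n).length = g n := by
  have hmono : ∀ {n m}, n ≤ m → g n <:+ g m := by
    intro n m h
    induction m, h using Nat.le_induction with
    | base => exact suffix_refl _
    | succ m _ ih => exact ih.trans (hg m)
  have hlt : ∀ i, i < (g (i + 1)).reverse.length := fun i => by
    simpa using hlen (i + 1)
  refine ⟨fun i => (g (i + 1)).reverse[i]'(hlt i), fun n => reverse_injective ?_⟩
  refine List.ext_getElem (by simp) fun i hi hi' => ?_
  simp only [reverse_hist, getElem_map, getElem_range]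
  rcases le_total (i + 1) n with h | h
  · exact (reverse_prefix.2 (hmono h)).getElem (hlt i)
  · exact ((reverse_prefix.2 (hmono h)).getElem hi').symm

variable (step : P → A → B → P) (p0 : P) (prio : P → ℕ) (σ : List A → B)

def histPos : List A → P
  | [] => p0
  | a :: t => step (histPos t) a (σ (a :: t))

def play (τ : P → A → B) (wa : ℕ → A) : ℕ → P
  | 0 => p0
  | j + 1 => step (play τ wa j) (wa j) (τ (play τ wa j) (wa j))

def Climb (c : ℕ) (x y : List A) : Prop :=
  y <:+ x ∧ (∀ z, z <:+ x → y.length < z.length → prio (histPos step p0 σ z) ≤ c) ∧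
    ∃ z, z <:+ x ∧ y.length < z.length ∧ prio (histPos step p0 σ z) = c

variable {step p0 prio σ}

theorem Climb.of_cons {c : ℕ} {a : A} {u x : List A}
    (hx : prio (histPos step p0 σ (a :: x)) ≤ c) (h : Climb step p0 prio σ c u (a :: x)) :
    Climb step p0 prio σ c u x := by
  obtain ⟨hsuf, hle, z, hz, hzlen, hzc⟩ := h
  refine ⟨(suffix_cons a x).trans hsuf, fun z' hz' hz'len => ?_,
    z, hz, by simp at hzlen; omega, hzc⟩
  rcases (Nat.lt_or_ge (a :: x).length z'.length) with hlt | hge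
  · exact hle z' hz' hlt
  · rwa [(suffix_of_suffix_length_le hz' hsuf hge).eq_of_length (by simp at hge ⊢; omega)]

theorem climb_cons {c : ℕ} {a : A} {x : List A} (hx : prio (histPos step p0 σ (a :: x)) = c) :
    Climb step p0 prio σ c (a :: x) x := by
  have heq : ∀ z, z <:+ a :: x → x.length < z.length → z = a :: x := fun z hz hlen =>
    hz.eq_of_length (by have := hz.length_le; simp at this ⊢; omega)
  refine ⟨suffix_cons a x, fun z hz hlen => ?_, a :: x, suffix_refl _, by simp, hx⟩
  rw [heq z hz hlen, hx]

theorem wellFounded_climb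
    (hσ : ∀ wa, WinsParity fun j => prio (histPos step p0 σ (hist wa j)))
    {c : ℕ} (hc : Odd c) : WellFounded (Climb step p0 prio σ c) := by
  rw [wellFounded_iff_isEmpty_descending_chain]
  refine ⟨fun ⟨g, hg⟩ => ?_⟩
  have hlt : ∀ n, (g n).length < (g (n + 1)).length := fun n => by
    obtain ⟨z, hz, hzlen, -⟩ := (hg n).2.2
    exact hzlen.trans_le hz.length_le
  have hlen : ∀ n, n ≤ (g n).length := fun n => by
    induction n with
    | zero => exact Nat.zero_le _
    | succ n ih => exact ih.trans_lt (hlt n)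
  obtain ⟨wa, hwa⟩ := exists_hist_eq_of_suffix_chain (fun n => (hg n).1) hlen
  have hsuf : ∀ {j n}, j ≤ (g n).length → hist wa j <:+ g n := fun h =>
    hwa _ ▸ hist_suffix_hist wa h
  have hle : ∀ n j, (g 0).length < j → j ≤ (g n).length →
      prio (histPos step p0 σ (hist wa j)) ≤ c := by
    intro n
    induction n with
    | zero => omega
    | succ n ih =>
      intro j hj hjn
      rcases le_or_gt j (g n).length with h | h
      · exact ih j hj h
      · exact (hg n).2.1 _ (hsuf hjn) (by simpa using h)
  have hfreq : ∃ᶠ j in atTop, prio (histPos step p0 σ (hist wa j)) = c := by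
    refine frequently_atTop.2 fun N => ?_
    obtain ⟨z, hz, hzlen, hzc⟩ := (hg N).2.2
    refine ⟨z.length, (hlen N).trans hzlen.le, ?_⟩
    rwa [← eq_hist_of_suffix (hwa (N + 1) ▸ hz)]
  obtain ⟨c', hc', hfreq'⟩ := hσ wa c hc hfreq
  obtain ⟨j, hjc', hj⟩ := (hfreq'.and_eventually (eventually_gt_atTop (g 0).length)).exists
  have := hle j j hj (hlen j)
  simp only at hjc'
  omega

variable (step p0 prio σ)

/-- `0` when `Climb c` is not well-founded, which happens only for even `c`. -/
noncomputable def climbRank (c : ℕ) (x : List A) : Ordinal.{0} :=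
  open Classical in
  if h : WellFounded (Climb step p0 prio σ c) then (h.apply x).rank else 0

/-- Entry `i` is the rank for priority `d - i`, so the lexicographic order compares the ranks
for higher priorities first. -/
noncomputable def signature (d : ℕ) (x : List A) : Fin (d + 1) → Ordinal.{0} :=
  fun i => climbRank step p0 prio σ (d - i) x

noncomputable def select (d : ℕ) (p : P) : List A :=
  open Classical in
  if hp : ∃ x, histPos step p0 σ x = p then
    Function.argminOn (fun x => toLex (signature step p0 prio σ d x))
      {x | histPos step p0 σ x = p} hp
  else []

noncomputable def positionalize (d : ℕ) (p : P) (a : A) : B :=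
  σ (a :: select step p0 prio σ d p)

variable {step p0 prio σ}

theorem climbRank_cons_le {c : ℕ} {a : A} {x : List A}
    (hx : prio (histPos step p0 σ (a :: x)) ≤ c) :
    climbRank step p0 prio σ c (a :: x) ≤ climbRank step p0 prio σ c x := by
  unfold climbRank
  split_ifs with h
  · exact Acc.rank_le_rank_of_forall _ _ fun u hu => hu.of_cons hx
  · exact le_rfl

theorem climbRank_cons_lt {c : ℕ} {a : A} {x : List A} (hwf : WellFounded (Climb step p0 prio σ c))
    (hx : prio (histPos step p0 σ (a :: x)) = c) :
    climbRank step p0 prio σ c (a :: x) < climbRank step p0 prio σ c x := by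
  rw [climbRank, climbRank, dif_pos hwf, dif_pos hwf]
  exact Acc.rank_lt_of_rel _ (climb_cons hx)

theorem truncate_signature_cons_le {c d : ℕ} {a : A} {x : List A} (hcd : c ≤ d)
    (hx : prio (histPos step p0 σ (a :: x)) ≤ c) :
    truncate (d - c) (signature step p0 prio σ d (a :: x)) ≤
      truncate (d - c) (signature step p0 prio σ d x) := fun i => by
  unfold truncate
  split_ifs with hi
  · exact climbRank_cons_le (hx.trans (by omega))
  · exact le_rfl

theorem truncate_signature_cons_lt {c d : ℕ} {a : A} {x : List A} (hcd : c ≤ d)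
    (hwf : WellFounded (Climb step p0 prio σ c)) (hx : prio (histPos step p0 σ (a :: x)) = c) :
    truncate (d - c) (signature step p0 prio σ d (a :: x)) <
      truncate (d - c) (signature step p0 prio σ d x) := by
  refine Pi.lt_def.2 ⟨truncate_signature_cons_le hcd hx.le, ⟨d - c, by omega⟩, ?_⟩
  simp only [truncate, signature, le_refl, if_true, show d - (d - c) = c by omega]
  exact climbRank_cons_lt hwf hx

theorem histPos_select {d : ℕ} {p : P} (hp : ∃ x, histPos step p0 σ x = p) :
    histPos step p0 σ (select step p0 prio σ d p) = p := by
  rw [select, dif_pos hp]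
  exact Function.argminOn_mem _ _ hp

theorem signature_select_le {d : ℕ} {x : List A} :
    toLex (signature step p0 prio σ d (select step p0 prio σ d (histPos step p0 σ x))) ≤
      toLex (signature step p0 prio σ d x) := by
  rw [select, dif_pos ⟨x, rfl⟩]
  exact Function.argminOn_le (fun x => toLex (signature step p0 prio σ d x))
    {y | histPos step p0 σ y = histPos step p0 σ x} rfl

theorem play_positionalize_succ (d : ℕ) (wa : ℕ → A) (j : ℕ) :
    play step p0 (positionalize step p0 prio σ d) wa (j + 1) =
      histPos step p0 σ (wa j :: select step p0 prio σ d
        (play step p0 (positionalize step p0 prio σ d) wa j)) := by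
  set τ := positionalize step p0 prio σ d
  have hreach : ∀ j, histPos step p0 σ (select step p0 prio σ d (play step p0 τ wa j)) =
      play step p0 τ wa j := by
    intro j
    induction j with
    | zero => exact histPos_select ⟨[], rfl⟩
    | succ j ih => exact histPos_select ⟨wa j :: select step p0 prio σ d (play step p0 τ wa j),
        by rw [histPos, ih]; rfl⟩
  rw [histPos, hreach j]
  rfl


theorem exists_positional_winning {d : ℕ} (hd : ∀ p, prio p ≤ d)
    (hσ : ∀ wa, WinsParity fun j => prio (histPos step p0 σ (hist wa j))) :
    ∃ τ : P → A → B, ∀ wa, WinsParity fun j => prio (play step p0 τ wa j) := by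
  refine ⟨positionalize step p0 prio σ d, fun wa c hc hfreq => ?_⟩
  set π := play step p0 (positionalize step p0 prio σ d) wa
  set x := fun j => select step p0 prio σ d (π j)
  have hπ : ∀ j, π (j + 1) = histPos step p0 σ (wa j :: x j) :=
    play_positionalize_succ d wa
  by_contra! hnot
  have hcd : c ≤ d := hfreq.exists.elim fun j hj => hj ▸ hd _
  have hle : ∀ᶠ j in atTop, prio (π (j + 1)) ≤ c :=
    (tendsto_add_atTop_nat 1).eventually
      (eventually_le_of_bounded_of_eventually_ne (fun j => hd _) hnot)
  have hfreq' : ∃ᶠ j in atTop, prio (π (j + 1)) = c := by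
    rwa [← map_add_atTop_eq_nat 1, frequently_map] at hfreq
  have hsel : ∀ j, toLex (truncate (d - c) (signature step p0 prio σ d (x (j + 1)))) ≤
      toLex (truncate (d - c) (signature step p0 prio σ d (wa j :: x j))) := fun j => by
    refine toLex_truncate_le_toLex_truncate ?_
    simp only [x, hπ]
    exact signature_select_le
  refine not_frequently_lt_of_eventually_le
    (f := fun j => toLex (truncate (d - c) (signature step p0 prio σ d (x j)))) ?_ ?_
  · filter_upwards [hle] with j hj
    rw [hπ] at hj
    exact (hsel j).trans (Pi.toLex_monotone (truncate_signature_cons_le hcd hj))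
  · refine hfreq'.mono fun j hj => ?_
    rw [hπ] at hj
    exact (hsel j).trans_lt
      (Pi.toLex_strictMono (truncate_signature_cons_lt hcd (wellFounded_climb hσ hc) hj))

end ParityGame

namespace TGE

open ParityGame

variable {ν η γc γg S M Q : Type}

def letter (T : TGE ν η γc γg S M) (s : S) (v : Set ν) (h : Set η) (g : Set γg) :
    Set ((ν ⊕ η) ⊕ (γc ⊕ γg)) :=
  Sum.inl '' (Sum.inl '' v ∪ Sum.inr '' h) ∪ Sum.inr '' (Sum.inl '' (T.out s v).1 ∪ Sum.inr '' g)

def config (T : TGE ν η γc γg S M) : List (Set ν × Set η) → S × M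
  | [] => (T.init, T.m0)
  | a :: t => (T.trans (config T t).1 a.1, ((T.out (config T t).1 a.1).2 (config T t).2 a.2).1)

def historyStrategy (T : TGE ν η γc γg S M) : List (Set ν × Set η) → Set γg
  | [] => ∅
  | a :: t => ((T.out (T.config t).1 a.1).2 (T.config t).2 a.2).2

def productStep (T : TGE ν η γc γg S M) (D : DPA (Set ((ν ⊕ η) ⊕ (γc ⊕ γg))) Q)
    (p : S × Q) (a : Set ν × Set η) (g : Set γg) : S × Q :=
  (T.trans p.1 a.1, D.trans p.2 (T.letter p.1 a.1 a.2 g))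

def ofPositional (T : TGE ν η γc γg S M) (D : DPA (Set ((ν ⊕ η) ⊕ (γc ⊕ γg))) Q)
    (τ : S × Q → Set ν × Set η → Set γg) : TGE ν η γc γg S Q where
  init := T.init
  m0 := D.init
  trans := T.trans
  out s v := ((T.out s v).1, fun q h =>
    (D.trans q (T.letter s v h (τ (s, q) (v, h))), τ (s, q) (v, h)))

theorem config_hist (T : TGE ν η γc γg S M) (wV : ℕ → Set ν) (wH : ℕ → Set η) (j : ℕ) :
    T.config (hist (fun i => (wV i, wH i)) j) = (T.run wV j, T.mem wV wH j) := by
  induction j with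
  | zero => rfl
  | succ j ih => simp only [hist, config, ih]; rfl

theorem histPos_productStep_hist (T : TGE ν η γc γg S M)
    (D : DPA (Set ((ν ⊕ η) ⊕ (γc ⊕ γg))) Q) (wV : ℕ → Set ν) (wH : ℕ → Set η) (j : ℕ) :
    histPos (T.productStep D) (T.init, D.init) T.historyStrategy (hist (fun i => (wV i, wH i)) j) =
      (T.run wV j, D.run (T.comp wV wH) j) := by
  induction j with
  | zero => rfl
  | succ j ih => simp only [hist, histPos, ih, historyStrategy, config_hist]; rfl

theorem winsParity_historyStrategy [Finite Q] {T : TGE ν η γc γg S M}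
    {D : DPA (Set ((ν ⊕ η) ⊕ (γc ⊕ γg))) Q} (h : T.RealizesL D.lang) (wa : ℕ → Set ν × Set η) :
    WinsParity fun j =>
      D.prio (histPos (T.productStep D) (T.init, D.init) T.historyStrategy (hist wa j)).2 := by
  have := histPos_productStep_hist T D (fun i => (wa i).1) (fun i => (wa i).2)
  simp only [this]
  exact (D.accepts_iff_winsParity _).1 (h _ _)

theorem mem_ofPositional (T : TGE ν η γc γg S M) (D : DPA (Set ((ν ⊕ η) ⊕ (γc ⊕ γg))) Q)
    (τ : S × Q → Set ν × Set η → Set γg) (wV : ℕ → Set ν) (wH : ℕ → Set η) (j : ℕ) :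
    (T.ofPositional D τ).mem wV wH j = D.run ((T.ofPositional D τ).comp wV wH) j := by
  induction j with
  | zero => rfl
  | succ j ih => simp only [mem, DPA.run, ← ih]; rfl

theorem play_productStep (T : TGE ν η γc γg S M) (D : DPA (Set ((ν ⊕ η) ⊕ (γc ⊕ γg))) Q)
    (τ : S × Q → Set ν × Set η → Set γg) (wV : ℕ → Set ν) (wH : ℕ → Set η) (j : ℕ) :
    play (T.productStep D) (T.init, D.init) τ (fun i => (wV i, wH i)) j =
      ((T.ofPositional D τ).run wV j, (T.ofPositional D τ).mem wV wH j) := by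
  induction j with
  | zero => rfl
  | succ j ih => simp only [play, ih]; rfl

end TGE

/-- If a language `L` recognized by a deterministic parity word
automaton with state set `Q` is `(V,H,C,G)`-realizable by some TGE with memory
set `M` (of any size), then `L` is `(V,H,C,G)`-realizable by a TGE with the
same state space whose memory set is `Q`. -/
theorem stmt12 {ν η γc γg S M Q : Type} [Fintype Q]
    (D : DPA (Set ((ν ⊕ η) ⊕ (γc ⊕ γg))) Q)
    (T : TGE ν η γc γg S M) (h : T.RealizesL D.lang) :
    ∃ T' : TGE ν η γc γg S Q, T'.RealizesL D.lang := by
  obtain ⟨τ, hτ⟩ := ParityGame.exists_positional_winning (prio := fun p : S × Q => D.prio p.2)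
    (fun p => Finset.le_sup (Finset.mem_univ p.2)) (TGE.winsParity_historyStrategy h)
  refine ⟨T.ofPositional D τ, fun wV wH => (D.accepts_iff_winsParity _).2 ?_⟩
  simpa only [TGE.play_productStep, TGE.mem_ofPositional] using hτ fun i => (wV i, wH i)
end

section
/- Parity games are memorylessly determined: in every parity game on a finite graph, one of the two players has a positional (memoryless) winning strategy from each vertex, and the winning regions of the two players partition the vertex set. -/
/-- A parity game on a finite graph: every vertex has a successor, an owner
(`true` = player Even), and a priority. -/
structure ParityGame (V : Type) where
  adj : V → V → Prop
  succ_nonempty : ∀ v, ∃ w, adj v w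
  ownerEven : V → Bool
  prio : V → ℕ

namespace ParityGame

variable {V : Type}

/-- An infinite play. -/
def IsPlay (Gm : ParityGame V) (p : ℕ → V) : Prop := ∀ n, Gm.adj (p n) (p (n+1))

/-- Player Even wins a play iff the maximal priority occurring infinitely
often is even. -/
def EvenWinsPlay (Gm : ParityGame V) (p : ℕ → V) : Prop :=
  Even (sSup (Gm.prio '' {v | ∀ N, ∃ n, N ≤ n ∧ p n = v}))

/-- A positional strategy. -/
def Positional (Gm : ParityGame V) (σ : V → V) : Prop := ∀ v, Gm.adj v (σ v)

/-- A play consistent with the positional strategy `σ` of the player `b`. -/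
def Consistent (Gm : ParityGame V) (b : Bool) (σ : V → V) (p : ℕ → V) : Prop :=
  Gm.IsPlay p ∧ ∀ n, Gm.ownerEven (p n) = b → p (n+1) = σ (p n)

/-- Player `b` (`true` = Even) wins from `v` with a positional strategy. -/
def WinsPos (Gm : ParityGame V) (b : Bool) (v : V) : Prop :=
  ∃ σ, Gm.Positional σ ∧ ∀ p, p 0 = v → Gm.Consistent b σ p →
    (if b then Gm.EvenWinsPlay p else ¬ Gm.EvenWinsPlay p)

end ParityGame

namespace PGAux

open ParityGame

variable {V : Type}

/-- The set of vertices occurring infinitely often in `p`. -/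
def InfOcc (p : ℕ → V) : Set V := {v | ∀ N, ∃ n, N ≤ n ∧ p n = v}

lemma evenWinsPlay_def (Gm : ParityGame V) (p : ℕ → V) :
    Gm.EvenWinsPlay p = Even (sSup (Gm.prio '' InfOcc p)) := rfl

/-- Pigeonhole: some vertex of a set visited infinitely often is itself visited
infinitely often. -/
lemma exists_infOcc_mem [Fintype V] (p : ℕ → V) (N : Set V)
    (h : ∀ M, ∃ m, M ≤ m ∧ p m ∈ N) : ∃ v ∈ N, v ∈ InfOcc p := by
  classical
  by_contra hc
  push_neg at hc
  -- each v ∈ N is visited finitely often, beyond some bound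
  have hfin : ∀ v : V, ∃ Mv : ℕ, v ∈ N → ∀ n, Mv ≤ n → p n ≠ v := by
    intro v
    by_cases hv : v ∈ N
    · obtain ⟨M, hM⟩ := by simpa [InfOcc] using hc v hv
      exact ⟨M, fun _ n hn => hM n hn⟩
    · exact ⟨0, fun h' => absurd h' hv⟩
  choose Mv hMv using hfin
  set K := Finset.univ.sup Mv with hK
  obtain ⟨m, hm, hmN⟩ := h K
  exact hMv (p m) hmN m (le_trans (Finset.le_sup (Finset.mem_univ (p m))) hm) rfl

lemma infOcc_nonempty [Fintype V] [Nonempty V] (p : ℕ → V) : (InfOcc p).Nonempty := by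
  obtain ⟨v, _, hv⟩ := exists_infOcc_mem p Set.univ (fun M => ⟨M, le_refl _, trivial⟩)
  exact ⟨v, hv⟩

lemma infOcc_subset_range (p : ℕ → V) : InfOcc p ⊆ Set.range p := by
  intro v hv
  obtain ⟨n, _, hn⟩ := hv 0
  exact ⟨n, hn⟩

lemma infOcc_tail (p : ℕ → V) (T : ℕ) : InfOcc (fun n => p (n + T)) = InfOcc p := by
  ext v
  constructor
  · intro hv N
    obtain ⟨n, hn, he⟩ := hv N
    exact ⟨n + T, le_trans hn (Nat.le_add_right _ _), he⟩
  · intro hv N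
    obtain ⟨n, hn, he⟩ := hv (N + T)
    refine ⟨n - T, by omega, ?_⟩
    show p (n - T + T) = v
    rw [Nat.sub_add_cancel (by omega)]; exact he

/-- Player `b` wins the play `p`. -/
def Wins (Gm : ParityGame V) (b : Bool) (p : ℕ → V) : Prop :=
  Gm.EvenWinsPlay p ↔ b = true

lemma wins_tail (Gm : ParityGame V) (b : Bool) (p : ℕ → V) (T : ℕ) :
    Wins Gm b (fun n => p (n + T)) ↔ Wins Gm b p := by
  unfold Wins
  rw [evenWinsPlay_def, evenWinsPlay_def, infOcc_tail]

lemma not_wins_iff (Gm : ParityGame V) (b : Bool) (p : ℕ → V) :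
    ¬ Wins Gm b p ↔ Wins Gm (!b) p := by
  unfold Wins; cases b <;> simp

/-- The maximal priority occurring infinitely often equals `d` when the play stays in a
region with priorities at most `d` and visits priority-`d` vertices infinitely often. -/
lemma wins_of_infOcc_top [Fintype V] (Gm : ParityGame V) (p : ℕ → V) (U : Set V) (d : ℕ)
    (hU : ∀ n, p n ∈ U) (hle : ∀ v ∈ U, Gm.prio v ≤ d)
    (hvis : ∀ M, ∃ m, M ≤ m ∧ p m ∈ {v ∈ U | Gm.prio v = d}) :
    sSup (Gm.prio '' InfOcc p) = d := by
  obtain ⟨v, hvN, hvio⟩ := exists_infOcc_mem p _ hvis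
  apply le_antisymm
  · apply csSup_le
    · exact ⟨d, v, hvio, hvN.2⟩
    · rintro x ⟨w, hw, rfl⟩
      obtain ⟨n, rfl⟩ := infOcc_subset_range p hw
      exact hle _ (hU n)
  · exact le_csSup (Set.Finite.bddAbove ((Set.toFinite _))) ⟨v, hvio, hvN.2⟩


variable [Fintype V] (Gm : ParityGame V)

/-- `U` is a subarena: every vertex of `U` has a successor in `U`. -/
def Sub (Gm : ParityGame V) (U : Set V) : Prop := ∀ v ∈ U, ∃ w ∈ U, Gm.adj v w

/-- One step of the attractor construction for player `b` inside `U`. -/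
def attrStep (b : Bool) (U A : Set V) : Set V :=
  A ∪ {v ∈ U | (Gm.ownerEven v = b ∧ ∃ w ∈ U, Gm.adj v w ∧ w ∈ A) ∨
               (Gm.ownerEven v ≠ b ∧ ∀ w ∈ U, Gm.adj v w → w ∈ A)}

def attrN (b : Bool) (T U : Set V) : ℕ → Set V
  | 0 => T
  | k+1 => attrStep Gm b U (attrN b T U k)

lemma attrN_mono (b : Bool) (T U : Set V) : ∀ {k l : ℕ}, k ≤ l →
    attrN Gm b T U k ⊆ attrN Gm b T U l := by
  intro k l h
  induction l with
  | zero => simp_all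
  | succ l ih =>
    rcases Nat.lt_or_ge k (l+1) with h' | h'
    · exact (ih (by omega)).trans (Set.subset_union_left)
    · have : k = l + 1 := by omega
      subst this; exact subset_rfl

lemma attrN_subset_U (b : Bool) (T U : Set V) (hTU : T ⊆ U) :
    ∀ k, attrN Gm b T U k ⊆ U := by
  intro k
  induction k with
  | zero => exact hTU
  | succ k ih =>
    rintro v (hv | ⟨hv, _⟩)
    · exact ih hv
    · exact hv

/-- The attractor of `T` for player `b` in `U`, packaged with all the
properties we need. -/
lemma attr_spec (b : Bool) (T U : Set V) (hTU : T ⊆ U) :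
    ∃ (A : Set V) (σA : V → V),
      T ⊆ A ∧ A ⊆ U ∧
      (∀ v ∈ U, Gm.ownerEven v = b → ∀ w ∈ A, Gm.adj v w → v ∈ A) ∧
      (Sub Gm U → ∀ v ∈ U \ A, ∃ w ∈ U \ A, Gm.adj v w) ∧
      (∀ v ∈ A, v ∉ T → Gm.ownerEven v = b → Gm.adj v (σA v) ∧ σA v ∈ A) ∧
      (∀ v ∈ A, v ∉ T → Gm.ownerEven v ≠ b → ∀ w ∈ U, Gm.adj v w → w ∈ A) ∧
      (∀ p, Gm.IsPlay p → (∀ n, p n ∈ U) → p 0 ∈ A →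
        (∀ n, p n ∈ A → p n ∉ T → Gm.ownerEven (p n) = b → p (n+1) = σA (p n)) →
        ∃ m, p m ∈ T) := by
  classical
  set A : Set V := ⋃ k, attrN Gm b T U k with hA
  have hTA : T ⊆ A := by
    intro v hv; exact Set.mem_iUnion.2 ⟨0, hv⟩
  have hAU : A ⊆ U := by
    intro v hv
    obtain ⟨k, hk⟩ := Set.mem_iUnion.1 hv
    exact attrN_subset_U Gm b T U hTU k hk
  -- rank
  set rk : V → ℕ := fun v => sInf {k | v ∈ attrN Gm b T U k} with hrk
  have hrk_mem : ∀ v ∈ A, v ∈ attrN Gm b T U (rk v) := by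
    intro v hv
    obtain ⟨k, hk⟩ := Set.mem_iUnion.1 hv
    exact Nat.sInf_mem (⟨k, hk⟩ : {k | v ∈ attrN Gm b T U k}.Nonempty)
  have hrk_min : ∀ v k, v ∈ attrN Gm b T U k → rk v ≤ k := fun v k hk => Nat.sInf_le hk
  have hrk_lt : ∀ v, ∀ k < rk v, v ∉ attrN Gm b T U k := by
    intro v k hk hmem
    exact absurd (hrk_min v k hmem) (by omega)
  -- closure for player b
  have hclosed : ∀ v ∈ U, Gm.ownerEven v = b → ∀ w ∈ A, Gm.adj v w → v ∈ A := by
    intro v hvU ho w hwA hadj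
    obtain ⟨k, hk⟩ := Set.mem_iUnion.1 hwA
    exact Set.mem_iUnion.2 ⟨k+1, Or.inr ⟨hvU, Or.inl ⟨ho, w, hAU hwA, hadj, hk⟩⟩⟩
  -- closure for player ¬b: all successors in A
  have hKall : ∀ v ∈ U, Gm.ownerEven v ≠ b → (∀ w ∈ U, Gm.adj v w → w ∈ A) → v ∈ A := by
    intro v hvU ho hall
    set K := Finset.univ.sup rk with hK
    have : ∀ w ∈ U, Gm.adj v w → w ∈ attrN Gm b T U K := by
      intro w hw hadj
      exact attrN_mono Gm b T U (Finset.le_sup (Finset.mem_univ w))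
        (hrk_mem w (hall w hw hadj))
    exact Set.mem_iUnion.2 ⟨K+1, Or.inr ⟨hvU, Or.inr ⟨ho, this⟩⟩⟩
  -- structure of non-target attractor vertices
  have hstruct : ∀ v ∈ A, v ∉ T →
      (Gm.ownerEven v = b → ∃ w, Gm.adj v w ∧ w ∈ A ∧ rk w < rk v) ∧
      (Gm.ownerEven v ≠ b → ∀ w ∈ U, Gm.adj v w → w ∈ A ∧ rk w < rk v) := by
    intro v hvA hvT
    have h0 : rk v ≠ 0 := by
      intro h
      exact hvT (by simpa [h, attrN] using hrk_mem v hvA)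
    obtain ⟨s, hs⟩ : ∃ s, rk v = s + 1 := ⟨rk v - 1, by omega⟩
    have hmem : v ∈ attrStep Gm b U (attrN Gm b T U s) := by
      have := hrk_mem v hvA; rw [hs] at this; exact this
    have hnot : v ∉ attrN Gm b T U s := hrk_lt v s (by omega)
    rcases hmem with h | ⟨_, h | h⟩
    · exact absurd h hnot
    · obtain ⟨ho, w, hwU, hadj, hwk⟩ := h
      constructor
      · intro _
        exact ⟨w, hadj, Set.mem_iUnion.2 ⟨s, hwk⟩, by
          have := hrk_min w s hwk; omega⟩
      · intro h'; exact absurd ho h'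
    · obtain ⟨ho, hall⟩ := h
      constructor
      · intro h'; exact absurd h' ho
      · intro _ w hw hadj
        exact ⟨Set.mem_iUnion.2 ⟨s, hall w hw hadj⟩, by
          have := hrk_min w s (hall w hw hadj); omega⟩
  -- the attractor strategy
  set σA : V → V := fun v =>
    if h : v ∈ A ∧ v ∉ T ∧ Gm.ownerEven v = b then
      Classical.choose ((hstruct v h.1 h.2.1).1 h.2.2)
    else v with hσ
  have hσspec : ∀ v, v ∈ A → v ∉ T → Gm.ownerEven v = b →
      Gm.adj v (σA v) ∧ σA v ∈ A ∧ rk (σA v) < rk v := by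
    intro v h1 h2 h3
    have hd : v ∈ A ∧ v ∉ T ∧ Gm.ownerEven v = b := ⟨h1, h2, h3⟩
    simp only [hσ, dif_pos hd]
    exact Classical.choose_spec ((hstruct v h1 h2).1 h3)
  refine ⟨A, σA, hTA, hAU, hclosed, ?_, ?_, ?_, ?_⟩
  · -- complement is a subarena
    intro hsub v ⟨hvU, hvA⟩
    by_cases ho : Gm.ownerEven v = b
    · obtain ⟨w, hwU, hadj⟩ := hsub v hvU
      refine ⟨w, ⟨hwU, ?_⟩, hadj⟩
      intro hwA
      exact hvA (hclosed v hvU ho w hwA hadj)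
    · by_contra hc
      push_neg at hc
      apply hvA
      apply hKall v hvU ho
      intro w hw hadj
      by_contra hwA
      exact (hc w ⟨hw, hwA⟩) hadj
  · intro v h1 h2 h3
    obtain ⟨ha, hb, _⟩ := hσspec v h1 h2 h3
    exact ⟨ha, hb⟩
  · intro v h1 h2 h3 w hw hadj
    exact ((hstruct v h1 h2).2 h3 w hw hadj).1
  · -- reach lemma
    intro p hplay hpU h0 hcons
    by_contra hc
    push_neg at hc
    -- show rank strictly decreases forever: impossible
    have key : ∀ n, p n ∈ A → p (n+1) ∈ A ∧ rk (p (n+1)) < rk (p n) := by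
      intro n hn
      by_cases ho : Gm.ownerEven (p n) = b
      · have := hσspec (p n) hn (hc n) ho
        rw [← hcons n hn (hc n) ho] at this
        exact ⟨this.2.1, this.2.2⟩
      · exact (hstruct (p n) hn (hc n)).2 ho (p (n+1)) (hpU (n+1)) (hplay n)
    have hall : ∀ n, p n ∈ A := by
      intro n; induction n with
      | zero => exact h0
      | succ n ih => exact (key n ih).1
    have hdesc : ∀ n, rk (p n) + n ≤ rk (p 0) := by
      intro n; induction n with
      | zero => omega
      | succ n ih => have := (key n (hall n)).2; omega
    have := hdesc (rk (p 0) + 1); omega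


/-- `σ` is positional for player `b` on `U`. -/
def posOn (Gm : ParityGame V) (U : Set V) (b : Bool) (σ : V → V) : Prop :=
  ∀ v ∈ U, Gm.ownerEven v = b → Gm.adj v (σ v) ∧ σ v ∈ U

/-- Player `b` wins from `v` with `σ` against all plays staying in `U`. -/
def WinsOn (Gm : ParityGame V) (U : Set V) (b : Bool) (σ : V → V) (v : V) : Prop :=
  ∀ p, p 0 = v → Gm.IsPlay p → (∀ n, p n ∈ U) →
    (∀ n, Gm.ownerEven (p n) = b → p (n+1) = σ (p n)) → Wins Gm b p

/-- The play in which Even follows `σE` and Odd follows `σO`. -/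
noncomputable def follow (Gm : ParityGame V) (σE σO : V → V) (v : V) : ℕ → V :=
  fun n => (fun u => if Gm.ownerEven u = true then σE u else σO u)^[n] v

lemma follow_zero (Gm : ParityGame V) (σE σO : V → V) (v : V) :
    follow Gm σE σO v 0 = v := rfl

lemma follow_succ (Gm : ParityGame V) (σE σO : V → V) (v : V) (n : ℕ) :
    follow Gm σE σO v (n+1) =
      (if Gm.ownerEven (follow Gm σE σO v n) = true then σE (follow Gm σE σO v n)
       else σO (follow Gm σE σO v n)) := by
  unfold follow
  rw [Function.iterate_succ_apply']

lemma follow_mem (Gm : ParityGame V) (U : Set V) (σE σO : V → V)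
    (hE : posOn Gm U true σE) (hO : posOn Gm U false σO) (v : V) (hv : v ∈ U) :
    ∀ n, follow Gm σE σO v n ∈ U := by
  intro n
  induction n with
  | zero => exact hv
  | succ n ih =>
    rw [follow_succ]
    by_cases h : Gm.ownerEven (follow Gm σE σO v n) = true
    · simp only [if_pos h]; exact (hE _ ih h).2
    · simp only [if_neg h]
      exact (hO _ ih (by simpa using h)).2

lemma follow_play (Gm : ParityGame V) (U : Set V) (σE σO : V → V)
    (hE : posOn Gm U true σE) (hO : posOn Gm U false σO) (v : V) (hv : v ∈ U) :
    Gm.IsPlay (follow Gm σE σO v) := by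
  intro n
  rw [follow_succ]
  have hm := follow_mem Gm U σE σO hE hO v hv n
  by_cases h : Gm.ownerEven (follow Gm σE σO v n) = true
  · simp only [if_pos h]; exact (hE _ hm h).1
  · simp only [if_neg h]; exact (hO _ hm (by simpa using h)).1

lemma follow_cons (Gm : ParityGame V) (b : Bool) (σE σO : V → V) (v : V) :
    ∀ n, Gm.ownerEven (follow Gm σE σO v n) = b →
      follow Gm σE σO v (n+1) = (if b = true then σE else σO) (follow Gm σE σO v n) := by
  intro n h
  rw [follow_succ, h]
  cases b <;> simp

/-- Both players cannot win from the same vertex. -/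
lemma no_both (Gm : ParityGame V) (U : Set V) (σE σO : V → V)
    (hE : posOn Gm U true σE) (hO : posOn Gm U false σO) (v : V) (hv : v ∈ U)
    (hwE : WinsOn Gm U true σE v) (hwO : WinsOn Gm U false σO v) : False := by
  set p := follow Gm σE σO v with hp
  have h1 : Wins Gm true p :=
    hwE p rfl (follow_play Gm U σE σO hE hO v hv) (follow_mem Gm U σE σO hE hO v hv)
      (fun n h => by have := follow_cons Gm true σE σO v n h; simpa using this)
  have h2 : Wins Gm false p :=
    hwO p rfl (follow_play Gm U σE σO hE hO v hv) (follow_mem Gm U σE σO hE hO v hv)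
      (fun n h => by have := follow_cons Gm false σE σO v n h; simpa using this)
  unfold Wins at h1 h2
  simp at h2
  exact h2 (h1.2 rfl)

/-- helper to pick the strategy of player b out of an Even/Odd pair -/
def pick (b : Bool) (σE σO : V → V) : V → V := if b = true then σE else σO

/-- Two winners is absurd. -/
lemma wins_both_false (Gm : ParityGame V) (q : ℕ → V)
    (h1 : Wins Gm true q) (h2 : Wins Gm false q) : False := by
  unfold Wins at h1 h2
  simp at h2
  exact h2 (h1.2 rfl)

/-- Region closure: a move from the `!b`-winning region that is allowed
(arbitrary for player `b`, the strategy move for player `!b`) stays in the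
`!b`-winning region. -/
lemma stay (Gm : ParityGame V) (U : Set V) (σE σO : V → V) (WE WO : Set V) (b : Bool)
    (hE : posOn Gm U true σE) (hO : posOn Gm U false σO)
    (hUn : WE ∪ WO = U)
    (hwE : ∀ v ∈ WE, WinsOn Gm U true σE v) (hwO : ∀ v ∈ WO, WinsOn Gm U false σO v)
    (v : V) (hv : v ∈ (if b = true then WO else WE)) (w : V) (hw : w ∈ U)
    (hadj : Gm.adj v w)
    (hmove : Gm.ownerEven v = !b → w = (if b = true then σO else σE) v) :
    w ∈ (if b = true then WO else WE) := by
  by_contra hc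
  have hvU : v ∈ U := by
    rcases Bool.eq_false_or_eq_true b with rfl | rfl
    · simp at hv; exact hUn ▸ Or.inr hv
    · simp at hv; exact hUn ▸ Or.inl hv
  have hwb : w ∈ (if b = true then WE else WO) := by
    rcases (hUn ▸ hw : w ∈ WE ∪ WO) with h | h <;> cases b <;> simp_all
  set q := follow Gm σE σO w with hq
  have hqU : ∀ n, q n ∈ U := follow_mem Gm U σE σO hE hO w hw
  have hqP : Gm.IsPlay q := follow_play Gm U σE σO hE hO w hw
  set p : ℕ → V := fun n => Nat.rec v (fun n _ => q n) n with hp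
  have hp0 : p 0 = v := rfl
  have hps : ∀ n, p (n+1) = q n := fun n => rfl
  have hq0 : q 0 = w := rfl
  have hpP : Gm.IsPlay p := by
    intro n
    cases n with
    | zero => rw [hp0, hps, hq0]; exact hadj
    | succ n => rw [hps, hps]; exact hqP n
  have hpU : ∀ n, p n ∈ U := by
    intro n
    cases n with
    | zero => rw [hp0]; exact hvU
    | succ n => rw [hps]; exact hqU n
  -- p is consistent with player (!b)'s strategy; q with player b's strategy
  have hqconsE : ∀ n, Gm.ownerEven (q n) = true → q (n+1) = σE (q n) := by
    intro n h
    have := follow_cons Gm true σE σO w n h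
    simpa using this
  have hqconsO : ∀ n, Gm.ownerEven (q n) = false → q (n+1) = σO (q n) := by
    intro n h
    have := follow_cons Gm false σE σO w n h
    simpa using this
  have hqtail : ∀ c, Wins Gm c (fun n => p (n + 1)) ↔ Wins Gm c q := by
    intro c
    have : (fun n => p (n + 1)) = q := by funext n; exact hps n
    rw [this]
  cases b with
  | true =>
    simp only [if_pos rfl] at hv hwb hmove
    have h1 : Wins Gm true q := hwE w hwb q rfl hqP hqU hqconsE
    have h2 : Wins Gm false p := by
      apply hwO v hv p hp0 hpP hpU
      intro n h
      cases n with
      | zero => rw [hps, hq0, hp0] at *; exact hmove (by simpa using h)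
      | succ n => rw [hps, hps] at *; exact hqconsO n h
    have h2' : Wins Gm false q := by
      rw [← hqtail false]
      exact (wins_tail Gm false p 1).2 h2
    exact wins_both_false Gm q h1 h2'
  | false =>
    simp only [Bool.false_eq_true, if_neg] at hv hwb hmove
    simp at hv hwb
    have h1 : Wins Gm false q := hwO w hwb q rfl hqP hqU hqconsO
    have h2 : Wins Gm true p := by
      apply hwE v hv p hp0 hpP hpU
      intro n h
      cases n with
      | zero => rw [hps, hq0, hp0] at *; exact hmove (by simpa using h)
      | succ n => rw [hps, hps] at *; exact hqconsE n h
    have h2' : Wins Gm true q := by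
      rw [← hqtail true]
      exact (wins_tail Gm true p 1).2 h2
    exact wins_both_false Gm q h2' h1

omit [Fintype V] in
lemma bool_union_eq (W : Bool → Set V) (b : Bool) :
    W true ∪ W false = W b ∪ W (!b) := by
  cases b
  · exact Set.union_comm _ _
  · rfl

omit [Fintype V] in
lemma bool_ne_eq {b c : Bool} (h : c ≠ b) : c = !b := by
  cases b <;> cases c <;> simp_all

omit [Fintype V] in
lemma bool_ne_not_eq {b c : Bool} (h : c ≠ !b) : c = b := by
  cases b <;> cases c <;> simp_all

omit [Fintype V] in
lemma bool_not_ne (b : Bool) : (!b) ≠ b := by cases b <;> simp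

/-- `b`-generic version of `stay`. -/
lemma stayB (Gm : ParityGame V) (U : Set V) (W : Bool → Set V) (σ : Bool → V → V) (b : Bool)
    (hpos : ∀ c, posOn Gm U c (σ c)) (hUn : W true ∪ W false = U)
    (hw : ∀ c, ∀ v ∈ W c, WinsOn Gm U c (σ c) v)
    (v : V) (hv : v ∈ W (!b)) (w : V) (hwU : w ∈ U) (hadj : Gm.adj v w)
    (hmove : Gm.ownerEven v = (!b) → w = σ (!b) v) : w ∈ W (!b) := by
  cases b
  · have := stay Gm U (σ true) (σ false) (W true) (W false) false
      (hpos true) (hpos false) hUn (hw true) (hw false) v (by simpa using hv)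
      w hwU hadj (by simpa using hmove)
    simpa using this
  · have := stay Gm U (σ true) (σ false) (W true) (W false) true
      (hpos true) (hpos false) hUn (hw true) (hw false) v (by simpa using hv)
      w hwU hadj (by simpa using hmove)
    simpa using this

/-- The solution concept produced by the Zielonka recursion. -/
def Solved (Gm : ParityGame V) (U : Set V) : Prop :=
  ∃ (W : Bool → Set V) (σ : Bool → V → V),
    W true ∪ W false = U ∧ (∀ b, posOn Gm U b (σ b)) ∧
    (∀ b, ∀ v ∈ W b, WinsOn Gm U b (σ b) v)

omit [Fintype V] in
lemma solved_empty (Gm : ParityGame V) (U : Set V) (h : U = ∅) : Solved Gm U := by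
  refine ⟨fun _ => ∅, fun _ => id, by simp [h], ?_, ?_⟩
  · intro b v hv
    simp [h] at hv
  · intro b v hv
    simp at hv

/-- Zielonka's theorem: every subarena with priorities `< n` is solved. -/
lemma solve (Gm : ParityGame V) :
    ∀ n k (U : Set V), (∀ v ∈ U, Gm.prio v < n) → U.ncard ≤ k → Sub Gm U →
      Solved Gm U := by
  intro n
  induction n with
  | zero =>
    intro k U hpr _ _
    refine solved_empty Gm U ?_
    ext v; simp only [Set.mem_empty_iff_false, iff_false]
    intro hv; exact absurd (hpr v hv) (by omega)
  | succ n ihn =>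
    intro k
    induction k with
    | zero =>
      intro U _ hk _
      exact solved_empty Gm U ((Set.ncard_eq_zero (Set.toFinite U)).1 (by omega))
    | succ k ihk =>
      intro U hpr hk hsub
      classical
      -- a successor-choice function on U
      have hany : ∃ f : V → V, ∀ v ∈ U, f v ∈ U ∧ Gm.adj v (f v) := by
        refine ⟨fun v => if h : v ∈ U then (hsub v h).choose else v, ?_⟩
        intro v hv
        simp only [dif_pos hv]
        obtain ⟨h1, h2⟩ := (hsub v hv).choose_spec
        exact ⟨h1, h2⟩
      obtain ⟨f, hf⟩ := hany
      obtain ⟨b, hb⟩ : ∃ b : Bool, decide (Even n) = b := ⟨_, rfl⟩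
      set N : Set V := {v ∈ U | Gm.prio v = n} with hN
      have hNU : N ⊆ U := fun v hv => hv.1
      obtain ⟨A, σA, hNA, hAU, hAcl, hAsub, hAstr, hAop, hAreach⟩ :=
        attr_spec Gm b N U hNU
      set U' : Set V := U \ A with hU'
      have hsub' : Sub Gm U' := hAsub hsub
      have hpr' : ∀ v ∈ U', Gm.prio v < n := by
        intro v hv
        have h1 := hpr v hv.1
        have h2 : Gm.prio v ≠ n := by
          intro h
          exact hv.2 (hNA ⟨hv.1, h⟩)
        omega
      obtain ⟨W', σ', hUn', hpos', hwin'⟩ :=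
        ihn U'.ncard U' hpr' le_rfl hsub'
      have hU'sub : U' ⊆ U := Set.diff_subset
      have hW'sub : ∀ c, W' c ⊆ U' := by
        intro c v hv
        rw [← hUn']
        cases c
        · exact Or.inr hv
        · exact Or.inl hv
      by_cases hc1 : W' (!b) = ∅
      · -- Case 1: player b wins everywhere on U
        have hcover : ∀ v ∈ U', v ∈ W' b := by
          intro v hv
          have h2 : v ∈ W' b ∪ W' (!b) := by
            rw [← bool_union_eq W' b, hUn']; exact hv
          rcases h2 with h | h
          · exact h
          · rw [hc1] at h; exact absurd h (Set.notMem_empty v)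
        obtain ⟨τ, hτ⟩ : ∃ τ : V → V,
            τ = fun v => if v ∈ A then (if v ∈ N then f v else σA v) else σ' b v :=
          ⟨_, rfl⟩
        obtain ⟨Wc, hWc⟩ : ∃ Wc : Bool → Set V,
            Wc = fun c => if c = b then U else ∅ := ⟨_, rfl⟩
        obtain ⟨σc, hσc⟩ : ∃ σc : Bool → V → V,
            σc = fun c => if c = b then τ else f := ⟨_, rfl⟩
        have hWcb : Wc b = U := by simp [hWc]
        have hσcb : σc b = τ := by simp [hσc]
        refine ⟨Wc, σc, ?_, ?_, ?_⟩
        · simp only [hWc]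
          cases b <;> simp
        · intro c v hv ho
          by_cases hcb : c = b
          · rw [hcb] at ho ⊢
            rw [hσcb, hτ]
            by_cases hvA : v ∈ A
            · by_cases hvN : v ∈ N
              · simp only [if_pos hvA, if_pos hvN]
                exact ⟨(hf v hv).2, (hf v hv).1⟩
              · simp only [if_pos hvA, if_neg hvN]
                obtain ⟨h1, h2⟩ := hAstr v hvA hvN ho
                exact ⟨h1, hAU h2⟩
            · simp only [if_neg hvA]
              obtain ⟨h1, h2⟩ := hpos' b v ⟨hv, hvA⟩ ho
              exact ⟨h1, h2.1⟩
          · simp only [hσc, if_neg hcb]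
            exact ⟨(hf v hv).2, (hf v hv).1⟩
        · intro c v hv
          by_cases hcb : c = b
          swap
          · rw [hWc] at hv
            simp only [if_neg hcb] at hv
            exact absurd hv (Set.notMem_empty v)
          rw [hcb]
          rw [hσcb]
          intro p hp0 hplay hpU hcons
          by_cases hio : ∀ M, ∃ m, M ≤ m ∧ p m ∈ N
          · have hsup := wins_of_infOcc_top Gm p U n hpU
              (fun w hw => by have := hpr w hw; omega) hio
            show Gm.EvenWinsPlay p ↔ b = true
            rw [evenWinsPlay_def, hsup, ← hb]
            exact (decide_eq_true_iff).symm
          · push_neg at hio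
            obtain ⟨M, hM⟩ := hio
            have hMA : ∀ m, M ≤ m → p m ∉ A := by
              by_contra hcon
              push_neg at hcon
              obtain ⟨m, hm, hmA⟩ := hcon
              have hq := hAreach (fun i => p (i + m))
                (fun i => by
                  show Gm.adj (p (i + m)) (p (i + 1 + m))
                  have h : i + 1 + m = (i + m) + 1 := by omega
                  rw [h]; exact hplay _)
                (fun i => hpU _)
                (by simpa using hmA)
                (fun i hiA hiN hio' => by
                  show p (i + 1 + m) = σA (p (i + m))
                  have h : i + 1 + m = (i + m) + 1 := by omega
                  rw [h, hcons _ hio', hτ]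
                  simp only [if_pos hiA, if_neg hiN])
              obtain ⟨j, hj⟩ := hq
              exact hM (j + m) (by omega) hj
            have hU'mem : ∀ i, p (i + M) ∈ U' := by
              intro i
              exact ⟨hpU _, hMA _ (by omega)⟩
            have hr : Wins Gm b (fun i => p (i + M)) := by
              apply hwin' b (p (0 + M)) (hcover _ (hU'mem 0)) _ rfl
              · intro i
                show Gm.adj (p (i + M)) (p (i + 1 + M))
                have h : i + 1 + M = (i + M) + 1 := by omega
                rw [h]; exact hplay _
              · exact hU'mem
              · intro i ho
                show p (i + 1 + M) = σ' b (p (i + M))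
                have h : i + 1 + M = (i + M) + 1 := by omega
                rw [h, hcons _ ho, hτ]
                simp only [if_neg (hU'mem i).2]
            exact (wins_tail Gm b p M).1 hr
      · -- Case 2: recurse on the complement of the opponent's attractor
        obtain ⟨B, σB, hWB, hBU, hBcl, hBsub, hBstr, hBop, hBreach⟩ :=
          attr_spec Gm (!b) (W' (!b)) U ((hW'sub (!b)).trans hU'sub)
        set U'' : Set V := U \ B with hU''
        have hsub'' : Sub Gm U'' := hBsub hsub
        have hpr'' : ∀ v ∈ U'', Gm.prio v < n + 1 := fun v hv => hpr v hv.1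
        have hcard : U''.ncard ≤ k := by
          obtain ⟨x, hx⟩ := Set.nonempty_iff_ne_empty.2 hc1
          have hxB : x ∈ B := hWB hx
          have hss : U'' ⊂ U := by
            constructor
            · exact Set.diff_subset
            · intro hcon
              exact (hcon (hBU hxB)).2 hxB
          have := Set.ncard_lt_ncard hss (Set.toFinite U)
          omega
        obtain ⟨W'', σ'', hUn'', hpos'', hwin''⟩ := ihk U'' hpr'' hcard hsub''
        have hU''sub : U'' ⊆ U := Set.diff_subset
        have hW''sub : ∀ c, W'' c ⊆ U'' := by
          intro c v hv
          rw [← hUn'']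
          cases c
          · exact Or.inr hv
          · exact Or.inl hv
        obtain ⟨τb, hτb⟩ : ∃ τ : V → V,
            τ = fun v => if v ∈ U'' then σ'' b v else f v := ⟨_, rfl⟩
        obtain ⟨τl, hτl⟩ : ∃ τ : V → V,
            τ = fun v => if v ∈ B then (if v ∈ W' (!b) then σ' (!b) v else σB v)
                else σ'' (!b) v := ⟨_, rfl⟩
        obtain ⟨Wc, hWc⟩ : ∃ Wc : Bool → Set V,
            Wc = fun c => if c = b then W'' b else W'' (!b) ∪ B := ⟨_, rfl⟩
        obtain ⟨σc, hσc⟩ : ∃ σc : Bool → V → V,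
            σc = fun c => if c = b then τb else τl := ⟨_, rfl⟩
        have hWcb : Wc b = W'' b := by simp [hWc]
        have hWcl : Wc (!b) = W'' (!b) ∪ B := by
          rw [hWc]; simp only [if_neg (bool_not_ne b)]
        have hσcb : σc b = τb := by simp [hσc]
        have hσcl : σc (!b) = τl := by
          rw [hσc]; simp only [if_neg (bool_not_ne b)]
        refine ⟨Wc, σc, ?_, ?_, ?_⟩
        · have h1 : Wc true ∪ Wc false = Wc b ∪ Wc (!b) := bool_union_eq Wc b
          rw [h1, hWcb, hWcl]
          have h2 : W'' b ∪ W'' (!b) = U'' := by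
            rw [← bool_union_eq W'' b, hUn'']
          rw [← Set.union_assoc, h2]
          apply Set.eq_of_subset_of_subset
          · exact Set.union_subset hU''sub hBU
          · intro v hv
            by_cases hvB : v ∈ B
            · exact Or.inr hvB
            · exact Or.inl ⟨hv, hvB⟩
        · intro c v hv ho
          by_cases hcb : c = b
          · rw [hcb] at ho ⊢
            rw [hσcb, hτb]
            by_cases hvU'' : v ∈ U''
            · simp only [if_pos hvU'']
              obtain ⟨h1, h2⟩ := hpos'' b v hvU'' ho
              exact ⟨h1, hU''sub h2⟩
            · simp only [if_neg hvU'']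
              exact ⟨(hf v hv).2, (hf v hv).1⟩
          · rw [bool_ne_eq hcb] at ho ⊢
            rw [hσcl, hτl]
            by_cases hvB : v ∈ B
            · by_cases hvW : v ∈ W' (!b)
              · simp only [if_pos hvB, if_pos hvW]
                obtain ⟨h1, h2⟩ := hpos' (!b) v (hW'sub _ hvW) ho
                exact ⟨h1, hU'sub h2⟩
              · simp only [if_pos hvB, if_neg hvW]
                obtain ⟨h1, h2⟩ := hBstr v hvB hvW ho
                exact ⟨h1, hBU h2⟩
            · simp only [if_neg hvB]
              obtain ⟨h1, h2⟩ := hpos'' (!b) v ⟨hv, hvB⟩ ho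
              exact ⟨h1, hU''sub h2⟩
        · intro c v hv
          by_cases hcb : c = b
          · -- player b wins from W'' b
            rw [hcb] at hv ⊢
            rw [hWcb] at hv
            rw [hσcb]
            intro p hp0 hplay hpU hcons
            have hinv : ∀ m, p m ∈ U'' := by
              intro m
              induction m with
              | zero => rw [hp0]; exact hW''sub b hv
              | succ m ih =>
                by_cases ho : Gm.ownerEven (p m) = b
                · rw [hcons m ho, hτb]
                  simp only [if_pos ih]
                  exact (hpos'' b (p m) ih ho).2
                · refine ⟨hpU _, fun hB => ?_⟩
                  have ho' : Gm.ownerEven (p m) = !b := bool_ne_eq ho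
                  exact ih.2 (hBcl (p m) (hpU m) ho' _ hB (hplay m))
            apply hwin'' b v hv p hp0 hplay hinv
            intro m ho
            rw [hcons m ho, hτb]
            simp only [if_pos (hinv m)]
          · -- player !b wins from W'' (!b) ∪ B
            have hc' : c = !b := bool_ne_eq hcb
            subst hc'
            rw [hWcl] at hv
            rw [hσcl]
            intro p hp0 hplay hpU hcons
            -- once in W' (!b), stay there
            have hstayW : ∀ m, p m ∈ W' (!b) → p (m+1) ∈ W' (!b) := by
              intro m hm
              have hmU' : p m ∈ U' := hW'sub _ hm
              have hnext_mem : p (m+1) ∈ U' := by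
                by_cases ho : Gm.ownerEven (p m) = !b
                · rw [hcons m ho, hτl]
                  simp only [if_pos (hWB hm), if_pos hm]
                  exact (hpos' (!b) (p m) hmU' ho).2
                · have hob : Gm.ownerEven (p m) = b := bool_ne_not_eq ho
                  refine ⟨hpU _, fun hA => ?_⟩
                  exact hmU'.2 (hAcl (p m) (hpU m) hob _ hA (hplay m))
              refine stayB Gm U' W' σ' b hpos' hUn' hwin' (p m) hm (p (m+1))
                hnext_mem (hplay m) ?_
              intro ho
              rw [hcons m ho, hτl]
              simp only [if_pos (hWB hm), if_pos hm]
            -- once in B, stay in B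
            have hstayB : ∀ m, p m ∈ B → p (m+1) ∈ B := by
              intro m hm
              by_cases hmW : p m ∈ W' (!b)
              · exact hWB (hstayW m hmW)
              · by_cases ho : Gm.ownerEven (p m) = !b
                · rw [hcons m ho, hτl]
                  simp only [if_pos hm, if_neg hmW]
                  exact (hBstr (p m) hm hmW ho).2
                · exact hBop (p m) hm hmW ho _ (hpU _) (hplay m)
            by_cases hB : ∃ m, p m ∈ B
            · obtain ⟨m, hm⟩ := hB
              have hBall : ∀ i, p (i + m) ∈ B := by
                intro i
                induction i with
                | zero => show p (0 + m) ∈ B; rw [Nat.zero_add]; exact hm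
                | succ i ih =>
                  have h : i + 1 + m = (i + m) + 1 := by omega
                  rw [h]; exact hstayB _ ih
              have hreach := hBreach (fun i => p (i + m))
                (fun i => by
                  show Gm.adj (p (i + m)) (p (i + 1 + m))
                  have h : i + 1 + m = (i + m) + 1 := by omega
                  rw [h]; exact hplay _)
                (fun i => hpU _)
                (by show p (0 + m) ∈ B; rw [Nat.zero_add]; exact hm)
                (fun i hiB hiW ho => by
                  show p (i + 1 + m) = σB (p (i + m))
                  have h : i + 1 + m = (i + m) + 1 := by omega
                  rw [h, hcons _ ho, hτl]
                  simp only [if_pos hiB, if_neg hiW])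
              obtain ⟨j, hj⟩ := hreach
              have hWall : ∀ i, p (i + (j + m)) ∈ W' (!b) := by
                intro i
                induction i with
                | zero =>
                  show p (0 + (j + m)) ∈ W' (!b)
                  rw [Nat.zero_add]
                  have h : j + m = j + m := rfl
                  exact hj
                | succ i ih =>
                  have h : i + 1 + (j + m) = (i + (j + m)) + 1 := by omega
                  rw [h]; exact hstayW _ ih
              have hr : Wins Gm (!b) (fun i => p (i + (j + m))) := by
                apply hwin' (!b) (p (0 + (j + m))) (hWall 0) _ rfl
                · intro i
                  show Gm.adj (p (i + (j + m))) (p (i + 1 + (j + m)))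
                  have h : i + 1 + (j + m) = (i + (j + m)) + 1 := by omega
                  rw [h]; exact hplay _
                · intro i
                  exact hW'sub _ (hWall i)
                · intro i ho
                  show p (i + 1 + (j + m)) = σ' (!b) (p (i + (j + m)))
                  have h : i + 1 + (j + m) = (i + (j + m)) + 1 := by omega
                  rw [h, hcons _ ho, hτl]
                  simp only [if_pos (hWB (hWall i)), if_pos (hWall i)]
              exact (wins_tail Gm (!b) p (j + m)).1 hr
            · push_neg at hB
              have hv'' : v ∈ W'' (!b) := by
                rcases hv with h | h
                · exact h
                · exact absurd (hp0 ▸ hB 0) (by rw [hp0] at *; exact fun hc => hc h)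
              have hall'' : ∀ m, p m ∈ U'' := fun m => ⟨hpU m, hB m⟩
              apply hwin'' (!b) v hv'' p hp0 hplay hall''
              intro m ho
              rw [hcons m ho, hτl]
              simp only [if_neg (hB m)]

end PGAux

/-- memoryless determinacy of parity games: from every vertex,
exactly one of the two players has a positional winning strategy; hence the
two winning regions partition the vertex set. -/
theorem stmt13 {V : Type} [Fintype V] (Gm : ParityGame V) (v : V) :
    (Gm.WinsPos true v ∨ Gm.WinsPos false v) ∧
      ¬ (Gm.WinsPos true v ∧ Gm.WinsPos false v) := by
  classical
  constructor
  · -- determinacy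
    obtain ⟨W, σ, hUn, hpos, hwin⟩ :=
      PGAux.solve Gm ((Finset.univ.sup Gm.prio) + 1) (Set.univ : Set V).ncard Set.univ
        (fun w _ => Nat.lt_succ_of_le (Finset.le_sup (Finset.mem_univ w)))
        le_rfl
        (fun u _ => by
          obtain ⟨w, hw⟩ := Gm.succ_nonempty u
          exact ⟨w, trivial, hw⟩)
    have hv : v ∈ W true ∪ W false := hUn.symm ▸ Set.mem_univ v
    have key : ∀ b : Bool, v ∈ W b → Gm.WinsPos b v := by
      intro b hvb
      refine ⟨fun u => if Gm.ownerEven u = b then σ b u else (Gm.succ_nonempty u).choose,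
        ?_, ?_⟩
      · intro u
        by_cases h : Gm.ownerEven u = b
        · dsimp only
          rw [if_pos h]
          exact (hpos b u trivial h).1
        · dsimp only
          rw [if_neg h]
          exact (Gm.succ_nonempty u).choose_spec
      · intro p hp0 ⟨hplay, hcons⟩
        have hw : PGAux.Wins Gm b p := by
          apply hwin b v hvb p hp0 hplay (fun _ => trivial)
          intro m ho
          rw [hcons m ho]
          simp [ho]
        cases b
        · unfold PGAux.Wins at hw
          simp at hw
          simpa using hw
        · unfold PGAux.Wins at hw
          simp at hw
          simpa using hw
    rcases hv with h | h
    · exact Or.inl (key true h)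
    · exact Or.inr (key false h)
  · -- uniqueness
    rintro ⟨⟨σE, hposE, hE⟩, ⟨σO, hposO, hO⟩⟩
    set p := PGAux.follow Gm σE σO v with hp
    have hposE' : PGAux.posOn Gm Set.univ true σE := fun u _ h => ⟨hposE u, trivial⟩
    have hposO' : PGAux.posOn Gm Set.univ false σO := fun u _ h => ⟨hposO u, trivial⟩
    have hplay : Gm.IsPlay p := PGAux.follow_play Gm Set.univ σE σO hposE' hposO' v trivial
    have hcE : ∀ n, Gm.ownerEven (p n) = true → p (n+1) = σE (p n) := by
      intro n h
      have := PGAux.follow_cons Gm true σE σO v n h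
      simpa using this
    have hcO : ∀ n, Gm.ownerEven (p n) = false → p (n+1) = σO (p n) := by
      intro n h
      have := PGAux.follow_cons Gm false σE σO v n h
      simpa using this
    have h1 := hE p rfl ⟨hplay, hcE⟩
    have h2 := hO p rfl ⟨hplay, hcO⟩
    simp at h1 h2
    exact h2 h1
end
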